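/- arXiv:1403.4349 — 8 statements merged into one kernel-verified Lean document; each statement's English description precedes it below -/
import Mathlib

section
/- Let P be a convex polyomino with V(P) ⊆ [(1,1),(m,n)], and let G_P be the bipartite graph on vertex set {s_1,...,s_m} ∪ {t_1,...,t_n} with an edge {s_i, t_j} whenever (i,j) ∈ V(P). Then every cycle of G_P of length 2r with r ≥ 3 has a chord. -/
/-- The four vertices of the unit cell of `ℕ²` with left lower corner `c`. -/
def cellVerts (c : ℕ × ℕ) : Set (ℕ × ℕ) :=
  {c, (c.1 + 1, c.2), (c.1, c.2 + 1), (c.1 + 1, c.2 + 1)}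

/-- Two cells (given by their left lower corners) share an edge. -/
def CellAdj (c d : ℕ × ℕ) : Prop :=
  (c.1 = d.1 ∧ (c.2 = d.2 + 1 ∨ d.2 = c.2 + 1)) ∨
  (c.2 = d.2 ∧ (c.1 = d.1 + 1 ∨ d.1 = c.1 + 1))

/-- A polyomino: a finite nonempty edge-connected collection of unit cells of `ℕ²`,
each cell recorded by its left lower corner. -/
structure Polyomino where
  cells : Finset (ℕ × ℕ)
  nonempty : cells.Nonempty
  connected : ∀ c ∈ cells, ∀ d ∈ cells,
    Relation.ReflTransGen (fun x y => CellAdj x y ∧ x ∈ cells ∧ y ∈ cells) c d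

/-- The vertex set `V(P)` of a polyomino. -/
def Polyomino.V (P : Polyomino) : Set (ℕ × ℕ) := ⋃ c ∈ P.cells, cellVerts c

def Polyomino.RowConvex (P : Polyomino) : Prop :=
  ∀ i k l j : ℕ, (i, j) ∈ P.cells → (k, j) ∈ P.cells → i ≤ l → l ≤ k → (l, j) ∈ P.cells

def Polyomino.ColConvex (P : Polyomino) : Prop :=
  ∀ i j l k : ℕ, (i, j) ∈ P.cells → (i, l) ∈ P.cells → j ≤ k → k ≤ l → (i, k) ∈ P.cells

/-- A convex polyomino is one that is both row and column convex. -/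
def Polyomino.Convex (P : Polyomino) : Prop := P.RowConvex ∧ P.ColConvex

lemma mem_V_iff (P : Polyomino) (x y : ℕ) :
    (x, y) ∈ P.V ↔ ∃ p q : ℕ, (p, q) ∈ P.cells ∧ (x = p ∨ x = p + 1) ∧ (y = q ∨ y = q + 1) := by
  simp only [Polyomino.V, Set.mem_iUnion, cellVerts, Set.mem_insert_iff, Set.mem_singleton_iff]
  constructor
  · rintro ⟨⟨p, q⟩, hc, h⟩
    refine ⟨p, q, hc, ?_⟩
    rcases h with h | h | h | h <;> simp_all [Prod.ext_iff]
  · rintro ⟨p, q, hc, hx, hy⟩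
    refine ⟨(p, q), hc, ?_⟩
    rcases hx with rfl | rfl <;> rcases hy with rfl | rfl <;> simp [Prod.ext_iff]

/-- Bridge lemma: a path from height `≥ y` to height `< y` crosses via a vertical
adjacency between heights `y` and `y - 1`. -/
lemma bridge (P : Polyomino) (y : ℕ) :
    ∀ a b : ℕ × ℕ,
      Relation.ReflTransGen (fun u v => CellAdj u v ∧ u ∈ P.cells ∧ v ∈ P.cells) a b →
      y ≤ a.2 → b.2 < y → ∃ c : ℕ, (c, y) ∈ P.cells ∧ (c, y - 1) ∈ P.cells := by
  intro a b hpath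
  induction hpath using Relation.ReflTransGen.head_induction_on with
  | refl => intro h1 h2; omega
  | head hstep _ ih =>
    rename_i u v _
    intro hu hb
    by_cases hv : y ≤ v.2
    · exact ih hv hb
    · push_neg at hv
      obtain ⟨hadj, hu', hv'⟩ := hstep
      rcases hadj with ⟨h1, h2⟩ | ⟨h1, h2⟩
      · have hy : u.2 = y := by omega
        refine ⟨u.1, ?_, ?_⟩
        · have : ((u.1 : ℕ), y) = u := by rw [← hy]
          exact this ▸ hu'
        · have : ((u.1 : ℕ), y - 1) = v := by
            have hv2 : v.2 = y - 1 := by omega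
            rw [h1, ← hv2]
          exact this ▸ hv'
      · omega

/-- From two cells in the same row, the vertices in between are vertices. -/
lemma sameRow (P : Polyomino) (hP : P.RowConvex) {p1 p2 q x : ℕ}
    (h1 : (p1, q) ∈ P.cells) (h2 : (p2, q) ∈ P.cells)
    (hx1 : p1 ≤ x) (hx2 : x ≤ p2 + 1) :
    ∃ p, (p, q) ∈ P.cells ∧ (x = p ∨ x = p + 1) := by
  by_cases h : x ≤ p2
  · exact ⟨x, hP p1 p2 x q h1 h2 hx1 h, Or.inl rfl⟩
  · exact ⟨p2, h2, Or.inr (by omega)⟩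

/-- Row interval property of `V(P)` for convex polyominoes. -/
lemma rowConvexV (P : Polyomino) (hP : P.Convex) {a b x y : ℕ}
    (ha : (a, y) ∈ P.V) (hb : (b, y) ∈ P.V) (hax : a ≤ x) (hxb : x ≤ b) :
    (x, y) ∈ P.V := by
  rw [mem_V_iff] at ha hb ⊢
  obtain ⟨p1, q1, hc1, hx1, hy1⟩ := ha
  obtain ⟨p2, q2, hc2, hx2, hy2⟩ := hb
  have hp1x : p1 ≤ x := by omega
  have hxp2 : x ≤ p2 + 1 := by omega
  by_cases hq : q1 = q2
  · subst hq
    obtain ⟨p, hp, hxp⟩ := sameRow P hP.1 hc1 hc2 hp1x hxp2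
    exact ⟨p, q1, hp, hxp, hy1⟩
  · rcases hy1 with h1 | h1 <;> rcases hy2 with h2 | h2
    · omega
    · -- y = q1, y = q2 + 1 : row q1 is the upper row
      obtain ⟨c, hcy, hcy1⟩ := bridge P y (p1, q1) (p2, q2)
        (P.connected _ hc1 _ hc2) (by simp; omega) (by simp; omega)
      have hcu : ((c : ℕ), q1) ∈ P.cells := by rwa [show q1 = y by omega]
      have hcl : ((c : ℕ), q2) ∈ P.cells := by rwa [show q2 = y - 1 by omega] 
      by_cases hxc : x ≤ c + 1
      · obtain ⟨p, hp, hxp⟩ := sameRow P hP.1 hc1 hcu hp1x hxc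
        exact ⟨p, q1, hp, hxp, Or.inl h1⟩
      · obtain ⟨p, hp, hxp⟩ := sameRow P hP.1 hcl hc2 (by omega) hxp2
        exact ⟨p, q2, hp, hxp, Or.inr h2⟩
    · -- y = q1 + 1, y = q2 : row q2 is the upper row
      obtain ⟨c, hcy, hcy1⟩ := bridge P y (p2, q2) (p1, q1)
        (P.connected _ hc2 _ hc1) (by simp; omega) (by simp; omega)
      have hcu : ((c : ℕ), q2) ∈ P.cells := by rwa [show q2 = y by omega]
      have hcl : ((c : ℕ), q1) ∈ P.cells := by rwa [show q1 = y - 1 by omega]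
      by_cases hxc : x ≤ c + 1
      · obtain ⟨p, hp, hxp⟩ := sameRow P hP.1 hc1 hcl hp1x hxc
        exact ⟨p, q1, hp, hxp, Or.inr h1⟩
      · obtain ⟨p, hp, hxp⟩ := sameRow P hP.1 hcu hc2 (by omega) hxp2
        exact ⟨p, q2, hp, hxp, Or.inl h2⟩
    · omega

/-- Every cycle of length `2r`, `r ≥ 3`, in the bipartite graph `G_P` of a convex
polyomino `P` (vertices `s_1,…,s_m, t_1,…,t_n`, edges `{s_i,t_j}` for `(i,j) ∈ V(P)`)
has a chord.  The cycle is encoded by its vertices `a_{2k-1} = (i_k, j_k)`,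
`a_{2k} = (i_{k+1}, j_k)`; a chord is an edge `{s_{i_t}, t_{j_s}}` of `G_P` joining
two non-consecutive vertices of the cycle. -/
theorem stmt_3 (P : Polyomino) (hP : P.Convex) (m n : ℕ)
    (hV : ∀ v ∈ P.V, 1 ≤ v.1 ∧ v.1 ≤ m ∧ 1 ≤ v.2 ∧ v.2 ≤ n)
    (r : ℕ) (hr : 3 ≤ r) (i j : ℕ → ℕ)
    (hwrap : i (r + 1) = i 1)
    (hi : ∀ k l : ℕ, 1 ≤ k → k < l → l ≤ r → i k ≠ i l)
    (hj : ∀ k l : ℕ, 1 ≤ k → k < l → l ≤ r → j k ≠ j l)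
    (hcyc : ∀ k : ℕ, 1 ≤ k → k ≤ r → (i k, j k) ∈ P.V ∧ (i (k + 1), j k) ∈ P.V) :
    ∃ s t : ℕ, 1 ≤ s ∧ s ≤ r ∧ 1 ≤ t ∧ t ≤ r ∧
      i t ≠ i s ∧ i t ≠ i (s + 1) ∧ (i t, j s) ∈ P.V := by
  by_contra hcon
  push_neg at hcon
  -- injectivity in symmetric form
  have inj : ∀ k l : ℕ, 1 ≤ k → k ≤ r → 1 ≤ l → l ≤ r → k ≠ l → i k ≠ i l := by
    intro k l hk hkr hl hlr hne
    rcases lt_or_gt_of_ne hne with h | h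
    · exact hi k l hk h hlr
    · exact (hi l k hl h hkr).symm
  -- no `i t` lies (weakly) between the endpoints of an edge unless it is an endpoint
  have key : ∀ s t : ℕ, 1 ≤ s → s ≤ r → 1 ≤ t → t ≤ r →
      ((i s ≤ i t ∧ i t ≤ i (s + 1)) ∨ (i (s + 1) ≤ i t ∧ i t ≤ i s)) →
      i t = i s ∨ i t = i (s + 1) := by
    intro s t hs hsr ht htr hbet
    by_contra hne
    push_neg at hne
    obtain ⟨hcs1, hcs2⟩ := hcyc s hs hsr
    have hmem : (i t, j s) ∈ P.V := by
      rcases hbet with ⟨h1, h2⟩ | ⟨h1, h2⟩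
      · exact rowConvexV P hP hcs1 hcs2 h1 h2
      · exact rowConvexV P hP hcs2 hcs1 h1 h2
    exact hcon s t hs hsr ht htr hne.1 hne.2 hmem
  -- maximum of i over [1, r]
  obtain ⟨t0, ht0mem, ht0max⟩ :=
    Finset.exists_max_image (Finset.Icc 1 r) i ⟨1, by simp; omega⟩
  rw [Finset.mem_Icc] at ht0mem
  -- the two cyclic neighbours of t0
  obtain ⟨sp, sn, hsp1, hspr, hsn1, hsnr, hspt0, hsnt0, hspsn, hspval, hsnval⟩ :
      ∃ sp sn : ℕ, 1 ≤ sp ∧ sp ≤ r ∧ 1 ≤ sn ∧ sn ≤ r ∧ sp ≠ t0 ∧ sn ≠ t0 ∧ sp ≠ sn ∧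
        i (sp + 1) = i t0 ∧ i (t0 + 1) = i sn := by
    by_cases h1 : t0 = 1
    · refine ⟨r, 2, by omega, le_refl r, by omega, by omega, by omega, by omega, by omega,
        ?_, ?_⟩
      · rw [hwrap, h1]
      · rw [h1]
    · by_cases h2 : t0 = r
      · refine ⟨t0 - 1, 1, by omega, by omega, by omega, by omega, by omega, by omega,
          by omega, ?_, ?_⟩
        · rw [show t0 - 1 + 1 = t0 by omega]
        · rw [h2, hwrap]
      · exact ⟨t0 - 1, t0 + 1, by omega, by omega, by omega, by omega, by omega, by omega,
          by omega, by rw [show t0 - 1 + 1 = t0 by omega], rfl⟩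
  -- second maximum t1
  have hne2 : ((Finset.Icc 1 r).erase t0).Nonempty := by
    refine ⟨sp, ?_⟩
    rw [Finset.mem_erase, Finset.mem_Icc]
    exact ⟨hspt0, hsp1, hspr⟩
  obtain ⟨t1, ht1mem, ht1max⟩ := Finset.exists_max_image _ i hne2
  rw [Finset.mem_erase, Finset.mem_Icc] at ht1mem
  obtain ⟨ht1t0, ht1a, ht1b⟩ := ht1mem
  have ht1lt : i t1 < i t0 := by
    have h1 := ht0max t1 (by rw [Finset.mem_Icc]; exact ⟨ht1a, ht1b⟩)
    have h2 := inj t1 t0 ht1a ht1b ht0mem.1 ht0mem.2 ht1t0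
    omega
  have hspmax : i sp ≤ i t1 :=
    ht1max sp (by rw [Finset.mem_erase, Finset.mem_Icc]; exact ⟨hspt0, hsp1, hspr⟩)
  have hsnmax : i sn ≤ i t1 :=
    ht1max sn (by rw [Finset.mem_erase, Finset.mem_Icc]; exact ⟨hsnt0, hsn1, hsnr⟩)
  -- t1 equals both neighbours in value
  have h1 : i t1 = i sp := by
    have := key sp t1 hsp1 hspr ht1a ht1b (Or.inl ⟨hspmax, by rw [hspval]; omega⟩)
    rcases this with h | h
    · exact h
    · rw [hspval] at h
      exact absurd h (inj t1 t0 ht1a ht1b ht0mem.1 ht0mem.2 ht1t0)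
  have h2 : i t1 = i sn := by
    have := key t0 t1 ht0mem.1 ht0mem.2 ht1a ht1b (Or.inr ⟨by rw [hsnval]; omega, by omega⟩)
    rcases this with h | h
    · exact absurd h (inj t1 t0 ht1a ht1b ht0mem.1 ht0mem.2 ht1t0)
    · rw [hsnval] at h; exact h
  exact inj sp sn hsp1 hspr hsn1 hsnr hspsn (h1 ▸ h2 ▸ rfl)
end

section
/- Let H ⊆ ℕⁿ be an affine semigroup minimally generated by h_1,...,h_m, and let H' ⊆ H be a homologically pure subsemigroup, i.e., H' is generated by a subset of {h_1,...,h_m} and for every h ∈ H' and every generator h_i with h − h_i ∈ H one has h_i ∈ H'. Then for every h ∈ H' and every i, the squarefree divisor complex Δ'_h of h computed with respect to H' equals the squarefree divisor complex Δ_h of h computed with respect to H. -/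
/-- The squarefree divisor complex `Δ_h` of `h` with respect to the affine semigroup
`H ⊆ ℕ^n` and its generators `g i`: the faces are the sets `F` of generators with
`h - ∑_{i ∈ F} g i ∈ H`. -/
def sqDivisorComplex {α : Type*} {n : ℕ} (g : α → Fin n → ℕ)
    (H : AddSubmonoid (Fin n → ℕ)) (h : Fin n → ℕ) : Set (Finset α) :=
  {F | ∃ w ∈ H, (∑ i ∈ F, g i) + w = h}

/-!
If `h ∈ H'` and `h = y + x` in `H`, then every generator occurring in `y` divides `h` in `H`,
so by purity it lies in `H'`; hence `y ∈ H'`. Applied to the cofactor `h - ∑_{i ∈ F} h_i` this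
shows that differences may be taken in `H'`, and applied to the generators of a face `F` it
shows, by minimality of the generating set, that `F` only uses generators of `H'`.
-/

namespace AddSubmonoid

theorem mem_of_add_eq_of_forall_generator {ι M : Type*} [AddCommMonoid M]
    {g : ι → M} {S : AddSubmonoid M} {h : M}
    (hg : ∀ i, (∃ x ∈ closure (Set.range g), g i + x = h) → g i ∈ S)
    {y : M} (hy : y ∈ closure (Set.range g)) (hyh : ∃ x ∈ closure (Set.range g), y + x = h) :
    y ∈ S := by
  induction hy using closure_induction with
  | mem _ hi => obtain ⟨i, rfl⟩ := hi; exact hg i hyh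
  | zero => exact zero_mem S
  | add y₁ y₂ hy₁ hy₂ ih₁ ih₂ =>
    obtain ⟨x, hx, rfl⟩ := hyh
    exact add_mem (ih₁ ⟨y₂ + x, add_mem hy₂ hx, (add_assoc _ _ _).symm⟩)
      (ih₂ ⟨y₁ + x, add_mem hy₁ hx, by abel⟩)

theorem mem_of_apply_mem_closure_image {α M : Type*} [AddMonoid M] {g : α → M}
    (hginj : Function.Injective g) (hmin : ∀ i, g i ∉ closure (Set.range g \ {g i}))
    {I : Set α} {i : α} (hi : g i ∈ closure (g '' I)) : i ∈ I := by
  by_contra hiI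
  refine hmin i (closure_mono ?_ hi)
  rintro _ ⟨j, hj, rfl⟩
  exact ⟨Set.mem_range_self j, fun hji => hiI (hginj hji ▸ hj)⟩

theorem exists_add_eq_of_mem_of_sum_add_eq {α M : Type*} [AddCommMonoid M] {g : α → M}
    {F : Finset α} {w h : M} (hw : w ∈ closure (Set.range g)) (hsum : (∑ j ∈ F, g j) + w = h)
    {i : α} (hi : i ∈ F) : ∃ x ∈ closure (Set.range g), g i + x = h := by
  classical
  exact ⟨(∑ j ∈ F.erase i, g j) + w,
      add_mem (sum_mem _ fun j _ => subset_closure (Set.mem_range_self j)) hw,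
      by rw [← hsum, ← add_assoc, Finset.add_sum_erase _ g hi]⟩

end AddSubmonoid

open AddSubmonoid

/-- Let `H ⊆ ℕ^n` be an affine semigroup minimally generated by `g 1, …, g m`, and let
`H'` be the homologically pure subsemigroup generated by the `g i` with `i ∈ I`.
Then for every `h ∈ H'`, the squarefree divisor complex of `h` with respect to `H'`
(faces contained in `I`, with differences taken in `H'`) coincides with the squarefree
divisor complex of `h` with respect to `H`. -/
theorem stmt_5 {n m : ℕ} (g : Fin m → Fin n → ℕ)
    (hginj : Function.Injective g)
    (hmin : ∀ i : Fin m, g i ∉ AddSubmonoid.closure (Set.range g \ {g i}))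
    (I : Set (Fin m))
    (hpure : ∀ h ∈ AddSubmonoid.closure (g '' I), ∀ i : Fin m,
      (∃ w ∈ AddSubmonoid.closure (Set.range g), g i + w = h) →
        g i ∈ AddSubmonoid.closure (g '' I))
    (h : Fin n → ℕ) (hh : h ∈ AddSubmonoid.closure (g '' I)) :
    {F : Finset (Fin m) | ↑F ⊆ I} ∩ sqDivisorComplex g (AddSubmonoid.closure (g '' I)) h =
      sqDivisorComplex g (AddSubmonoid.closure (Set.range g)) h := by
  ext F
  constructor
  · rintro ⟨-, w, hw, hsum⟩
    exact ⟨w, closure_mono (Set.image_subset_range g I) hw, hsum⟩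
  · rintro ⟨w, hw, hsum⟩
    refine ⟨fun i hi => mem_of_apply_mem_closure_image hginj hmin
      (hpure h hh i (exists_add_eq_of_mem_of_sum_add_eq hw hsum hi)), w, ?_, hsum⟩
    exact mem_of_add_eq_of_forall_generator (hpure h hh) hw
      ⟨_, sum_mem fun j _ => subset_closure (Set.mem_range_self j), (add_comm _ _).trans hsum⟩
end

section
/- Let H ⊆ ℕⁿ be an affine semigroup with minimal generators h_1,...,h_m, K a field, and K[H] the semigroup algebra presented as S/I_H where S = K[x_1,...,x_m] is ℤⁿ-graded by deg x_i = h_i. If H' is a homologically pure subsemigroup of H (generated by a subset of the generators, and closed in H in the sense that h ∈ H', h − h_i ∈ H implies h_i ∈ H'), then the graded Betti numbers satisfy β_{i,h}(I_{H'}) ≤ β_{i,h}(I_H) for all i and all h ∈ H'. -/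
open scoped Classical

/-- The `j`-chains over `K` of a simplicial complex `Δ` on a finite vertex set `V`:
the `K`-vector space with basis the faces of `Δ` of cardinality `j` (reduced chains:
`j = 0` corresponds to the empty face). -/
abbrev Chains (K : Type*) [Field K] {V : Type*} (Δ : Set (Finset V)) (j : ℕ) : Type _ :=
  {F : Finset V // F ∈ Δ ∧ F.card = j} → K

/-- The simplicial boundary map of the (reduced) chain complex of `Δ`:
the basis face `F` of cardinality `j+1` is sent to `∑_{v ∈ F} ± (F \ {v})`,
with the usual signs determined by the linear order on the vertices. -/
noncomputable def bdry (K : Type*) [Field K] {V : Type*} [Fintype V] [LinearOrder V]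
    (Δ : Set (Finset V)) (j : ℕ) : Chains K Δ (j + 1) →ₗ[K] Chains K Δ j :=
  LinearMap.pi fun G => ∑ v ∈ Finset.univ.filter (fun v => v ∉ G.1),
    (if h : insert v G.1 ∈ Δ ∧ (insert v G.1).card = j + 1
      then ((-1 : K) ^ ((G.1.filter (fun w => w < v)).card)) •
        (LinearMap.proj (⟨insert v G.1, h⟩ : {F : Finset V // F ∈ Δ ∧ F.card = j + 1}))
      else 0)

/-- The dimension of the `i`-th reduced simplicial homology `H̃_i(Δ; K)`:
cycles of dimension `i` (faces of cardinality `i + 1`) modulo boundaries. -/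
noncomputable def reducedHomologyRank (K : Type*) [Field K] {V : Type*} [Fintype V]
    [LinearOrder V] (Δ : Set (Finset V)) (i : ℕ) : Cardinal :=
  Module.rank K
    (↥(LinearMap.ker (bdry K Δ i)) ⧸
      Submodule.comap (LinearMap.ker (bdry K Δ i)).subtype (LinearMap.range (bdry K Δ (i + 1))))

/-!
Both Betti numbers are reduced homology ranks of squarefree divisor complexes, and for a
homologically pure `H'` the two complexes of `h ∈ H'` coincide. A face `F` of `Δ_h(H)` gives
a factorisation `h = ∑_{j ∈ F} g j + w` in `H`; purity, propagated from the generators to all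
of `H` by closure induction, puts `w` in `H'`, and puts each `g j` with `j ∈ F` in `H'`, so
that minimality of the generators forces `j ∈ I`.
-/

section Divisor

variable {M : Type*} [AddCommMonoid M]

def AddSubmonoid.Divides (H : AddSubmonoid M) (w h : M) : Prop :=
  ∃ v ∈ H, w + v = h

theorem AddSubmonoid.Divides.of_add_left {H : AddSubmonoid M} {a b h : M}
    (hab : H.Divides (a + b) h) (hb : b ∈ H) : H.Divides a h := by
  obtain ⟨v, hv, rfl⟩ := hab
  exact ⟨b + v, add_mem hb hv, (add_assoc a b v).symm⟩

theorem AddSubmonoid.Divides.of_add_right {H : AddSubmonoid M} {a b h : M}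
    (hab : H.Divides (a + b) h) (ha : a ∈ H) : H.Divides b h :=
  (add_comm a b ▸ hab).of_add_left ha

theorem AddSubmonoid.mem_of_divides_closure {S : Set M} {H' : AddSubmonoid M} {h : M}
    (hS : ∀ s ∈ S, (closure S).Divides s h → s ∈ H') {w : M} (hw : w ∈ closure S)
    (hdiv : (closure S).Divides w h) : w ∈ H' := by
  induction hw using AddSubmonoid.closure_induction with
  | mem s hs => exact hS s hs hdiv
  | zero => exact zero_mem _
  | add a b ha hb iha ihb =>
    exact add_mem (iha (hdiv.of_add_left hb)) (ihb (hdiv.of_add_right ha))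

end Divisor

theorem mem_of_mem_closure_image {α M : Type*} [AddCommMonoid M] {g : α → M}
    (hginj : Function.Injective g) (hmin : ∀ i, g i ∉ AddSubmonoid.closure (Set.range g \ {g i}))
    {I : Set α} {j : α} (hj : g j ∈ AddSubmonoid.closure (g '' I)) : j ∈ I := by
  by_contra hjI
  refine hmin j (AddSubmonoid.closure_mono ?_ hj)
  rintro _ ⟨k, hkI, rfl⟩
  exact ⟨⟨k, rfl⟩, fun hgk => hjI (hginj hgk ▸ hkI)⟩

theorem sqDivisorComplex_eq_divides {α : Type*} {n : ℕ} (g : α → Fin n → ℕ)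
    (H : AddSubmonoid (Fin n → ℕ)) (h : Fin n → ℕ) :
    sqDivisorComplex g H h = {F | H.Divides (∑ i ∈ F, g i) h} := rfl

theorem sqDivisorComplex_closure_image_eq {α : Type*} {n : ℕ} {g : α → Fin n → ℕ}
    (hginj : Function.Injective g)
    (hmin : ∀ i, g i ∉ AddSubmonoid.closure (Set.range g \ {g i})) {I : Set α}
    {h : Fin n → ℕ}
    (hpure : ∀ i, (AddSubmonoid.closure (Set.range g)).Divides (g i) h →
      g i ∈ AddSubmonoid.closure (g '' I)) :
    {F : Finset α | ↑F ⊆ I} ∩ sqDivisorComplex g (AddSubmonoid.closure (g '' I)) h =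
      sqDivisorComplex g (AddSubmonoid.closure (Set.range g)) h := by
  set H := AddSubmonoid.closure (Set.range g)
  have hgen : ∀ j, g j ∈ H := fun j => AddSubmonoid.subset_closure ⟨j, rfl⟩
  simp only [sqDivisorComplex_eq_divides]
  ext F
  simp only [Set.mem_inter_iff, Set.mem_ofPred_eq]
  constructor
  · rintro ⟨-, w, hw, heq⟩
    exact ⟨w, AddSubmonoid.closure_mono (Set.image_subset_range g I) hw, heq⟩
  · intro hF
    obtain ⟨w, hw, heq⟩ := id hF
    have hwI : w ∈ AddSubmonoid.closure (g '' I) :=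
      AddSubmonoid.mem_of_divides_closure (by rintro _ ⟨j, rfl⟩; exact hpure j) hw
        ⟨_, sum_mem fun j _ => hgen j, (add_comm _ _).trans heq⟩
    refine ⟨fun j hj => mem_of_mem_closure_image hginj hmin (hpure j ?_), w, hwI, heq⟩
    rw [← Finset.add_sum_erase F g hj] at hF
    exact hF.of_add_left (sum_mem fun k _ => hgen k)

/-- Let `H ⊆ ℕ^n` be an affine semigroup minimally generated by `g 1, …, g m`, `K` a
field, and `H'` a homologically pure subsemigroup generated by the `g i`, `i ∈ I`.
By the Bruns–Herzog formula, the `ℤⁿ`-graded Betti numbers of the toric ideals are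
`β_{i,h}(I_H) = dim_K H̃_i(Δ_h; K)` (and similarly for `H'` using the complex with
faces inside `I`).  Then `β_{i,h}(I_{H'}) ≤ β_{i,h}(I_H)` for all `i` and `h ∈ H'`. -/
theorem stmt_6 {n m : ℕ} (K : Type*) [Field K] (g : Fin m → Fin n → ℕ)
    (hginj : Function.Injective g)
    (hmin : ∀ i : Fin m, g i ∉ AddSubmonoid.closure (Set.range g \ {g i}))
    (I : Set (Fin m))
    (hpure : ∀ h ∈ AddSubmonoid.closure (g '' I), ∀ i : Fin m,
      (∃ w ∈ AddSubmonoid.closure (Set.range g), g i + w = h) →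
        g i ∈ AddSubmonoid.closure (g '' I))
    (i : ℕ) (h : Fin n → ℕ) (hh : h ∈ AddSubmonoid.closure (g '' I)) :
    reducedHomologyRank K
        ({F : Finset (Fin m) | ↑F ⊆ I} ∩
          sqDivisorComplex g (AddSubmonoid.closure (g '' I)) h) i ≤
      reducedHomologyRank K
        (sqDivisorComplex g (AddSubmonoid.closure (Set.range g)) h) i := by
  rw [sqDivisorComplex_closure_image_eq hginj hmin (fun j => hpure h hh j)]
end

section
/- Let P be a finite poset with no antichain of size 3, and suppose P has at least two minimal elements, at least two maximal elements, and can be written as a disjoint union of two chains C and C' each of cardinality at least 2 (Dilworth decomposition), where the minimal elements of C and C' are distinct and the maximal elements of C and C' are distinct. Then there exists a linear extension π of P with at least 2 descents. -/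
open scoped Classical

/-- `π` is a linear extension of the (strict, compatibly labeled) partial order `r`
on `{ξ_1, …, ξ_d}`: whenever `ξ_{π a} < ξ_{π b}` in the poset, `a < b`. -/
def IsLinExt {d : ℕ} (r : Fin d → Fin d → Prop) (π : Equiv.Perm (Fin d)) : Prop :=
  ∀ a b : Fin d, r (π a) (π b) → a < b

/-- The number of descents of the permutation `π = π 0, π 1, …, π (d-1)`:
positions `j` with `π j > π (j+1)`. -/
noncomputable def descents {d : ℕ} (π : Equiv.Perm (Fin d)) : ℕ :=
  (Finset.univ.filter fun j : Fin d =>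
    ∃ hj : (j : ℕ) + 1 < d, π ⟨(j : ℕ) + 1, hj⟩ < π j).card

/-- `A` is an antichain (clutter) of the strict order `r`. -/
def IsAntichain' {d : ℕ} (r : Fin d → Fin d → Prop) (A : Finset (Fin d)) : Prop :=
  ∀ a ∈ A, ∀ b ∈ A, a ≠ b → ¬ r a b ∧ ¬ r b a

/-- `S` is a maximal chain of the strict order `r`. -/
def IsMaxChain' {d : ℕ} (r : Fin d → Fin d → Prop) (S : Set (Fin d)) : Prop :=
  (∀ a ∈ S, ∀ b ∈ S, a ≠ b → r a b ∨ r b a) ∧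
  ∀ T : Set (Fin d), (∀ a ∈ T, ∀ b ∈ T, a ≠ b → r a b ∨ r b a) → S ⊆ T → S = T

/-- The poset is pure: all maximal chains have the same cardinality. -/
def IsPure' {d : ℕ} (r : Fin d → Fin d → Prop) : Prop :=
  ∀ S T : Set (Fin d), IsMaxChain' r S → IsMaxChain' r T → S.ncard = T.ncard

/-- No element is comparable to all other elements (the lattice `J(P)` is simple). -/
def IsSimple' {d : ℕ} (r : Fin d → Fin d → Prop) : Prop :=
  ∀ x : Fin d, ∃ y : Fin d, y ≠ x ∧ ¬ r x y ∧ ¬ r y x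

/-- Let `P` be a finite poset with no antichain of size `3`, written as a disjoint
union of two chains `C` and `C'` of cardinality at least `2` (Dilworth), such that
`P` has two distinct minimal elements `ξ ∈ C`, `μ ∈ C'` and two distinct maximal
elements `ξ' ∈ C`, `μ' ∈ C'`.  Then `P` admits a linear extension with at least two
descents. -/
theorem stmt_8 {d : ℕ} (r : Fin d → Fin d → Prop)
    (htrans : ∀ a b c : Fin d, r a b → r b c → r a c)
    (hcompat : ∀ a b : Fin d, r a b → a < b)
    (hno3 : ∀ A : Finset (Fin d), IsAntichain' r A → A.card ≤ 2)
    (C C' : Finset (Fin d)) (hdisj : Disjoint C C') (hunion : C ∪ C' = Finset.univ)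
    (hC : ∀ a ∈ C, ∀ b ∈ C, a ≠ b → r a b ∨ r b a)
    (hC' : ∀ a ∈ C', ∀ b ∈ C', a ≠ b → r a b ∨ r b a)
    (hC2 : 2 ≤ C.card) (hC'2 : 2 ≤ C'.card)
    (ξ : Fin d) (hξC : ξ ∈ C) (hξmin : ∀ b : Fin d, ¬ r b ξ)
    (μ : Fin d) (hμC' : μ ∈ C') (hμmin : ∀ b : Fin d, ¬ r b μ)
    (ξ' : Fin d) (hξ'C : ξ' ∈ C) (hξ'max : ∀ b : Fin d, ¬ r ξ' b)
    (μ' : Fin d) (hμ'C' : μ' ∈ C') (hμ'max : ∀ b : Fin d, ¬ r μ' b) :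
    ∃ π : Equiv.Perm (Fin d), IsLinExt r π ∧ 2 ≤ descents π := by
  -- basic cardinality
  have hcard : C.card + C'.card = d := by
    rw [← Finset.card_union_of_disjoint hdisj, hunion, Finset.card_univ, Fintype.card_fin]
  have hd4 : 4 ≤ d := by omega
  -- ξ and μ are distinct and not maximal
  have hξμ : ξ ≠ μ := fun h => (Finset.disjoint_left.mp hdisj hξC) (h ▸ hμC')
  have hξ'μ' : ξ' ≠ μ' := fun h => (Finset.disjoint_left.mp hdisj hξ'C) (h ▸ hμ'C')
  have hξnm : ∃ b, r ξ b := by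
    obtain ⟨b, hbC, hbne⟩ := Finset.exists_mem_ne (by omega : 1 < C.card) ξ
    rcases hC ξ hξC b hbC hbne.symm with h | h
    · exact ⟨b, h⟩
    · exact absurd h (hξmin b)
  have hμnm : ∃ b, r μ b := by
    obtain ⟨b, hbC, hbne⟩ := Finset.exists_mem_ne (by omega : 1 < C'.card) μ
    rcases hC' μ hμC' b hbC hbne.symm with h | h
    · exact ⟨b, h⟩
    · exact absurd h (hμmin b)
  -- choose ordered pairs of minimals and maximals
  obtain ⟨m₀, m₁, hm01, hm₀, hm₁, hm₀nm, hm₁nm⟩ :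
      ∃ a b : Fin d, a < b ∧ (∀ c, ¬ r c a) ∧ (∀ c, ¬ r c b) ∧ (∃ c, r a c) ∧ (∃ c, r b c) := by
    rcases lt_or_gt_of_ne hξμ with h | h
    · exact ⟨ξ, μ, h, hξmin, hμmin, hξnm, hμnm⟩
    · exact ⟨μ, ξ, h, hμmin, hξmin, hμnm, hξnm⟩
  obtain ⟨M₀, M₁, hM01, hM₀, hM₁⟩ :
      ∃ a b : Fin d, a < b ∧ (∀ c, ¬ r a c) ∧ (∀ c, ¬ r b c) := by
    rcases lt_or_gt_of_ne hξ'μ' with h | h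
    · exact ⟨ξ', μ', h, hξ'max, hμ'max⟩
    · exact ⟨μ', ξ', h, hμ'max, hξ'max⟩
  -- the minimals are distinct from the maximals
  have hm₀M₀ : m₀ ≠ M₀ := by rintro rfl; exact (hm₀nm.elim fun c hc => hM₀ c hc)
  have hm₀M₁ : m₀ ≠ M₁ := by rintro rfl; exact (hm₀nm.elim fun c hc => hM₁ c hc)
  have hm₁M₀ : m₁ ≠ M₀ := by rintro rfl; exact (hm₁nm.elim fun c hc => hM₀ c hc)
  have hm₁M₁ : m₁ ≠ M₁ := by rintro rfl; exact (hm₁nm.elim fun c hc => hM₁ c hc)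
  have hm01' : m₀ ≠ m₁ := ne_of_lt hm01
  have hM01' : M₀ ≠ M₁ := ne_of_lt hM01
  -- the key function
  set key : Fin d → ℕ := fun x =>
    if x = m₁ then 0 else if x = m₀ then 1
    else if x = M₁ then d + 2 else if x = M₀ then d + 3 else 2 + (x : ℕ) with hkeydef
  have hkeylt : ∀ x y, r x y → key x < key y := by
    intro x y hr
    have hxy : (x : ℕ) < y := hcompat x y hr
    have hym0 : y ≠ m₀ := by rintro rfl; exact hm₀ x hr
    have hym1 : y ≠ m₁ := by rintro rfl; exact hm₁ x hr
    have hxM0 : x ≠ M₀ := by rintro rfl; exact hM₀ y hr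
    have hxM1 : x ≠ M₁ := by rintro rfl; exact hM₁ y hr
    have hylt : (y : ℕ) < d := y.isLt
    have hxlt : (x : ℕ) < d := x.isLt
    simp only [hkeydef]
    split_ifs <;> first | contradiction | omega
  have hkm₁ : key m₁ = 0 := by simp [hkeydef]
  have hkm₀ : key m₀ = 1 := by simp [hkeydef, hm01']
  have hkM₁ : key M₁ = d + 2 := by simp [hkeydef, hm₁M₁.symm, hm₀M₁.symm]
  have hkM₀ : key M₀ = d + 3 := by simp [hkeydef, hm₁M₀.symm, hm₀M₀.symm, hM01']
  have hkub : ∀ x, key x ≤ d + 3 := by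
    intro x
    have := x.isLt
    simp only [hkeydef]
    split_ifs <;> omega
  have hk0 : ∀ x, key x = 0 → x = m₁ := by
    intro x h
    have := x.isLt
    simp only [hkeydef] at h
    split_ifs at h <;> first | assumption | omega
  have hk01 : ∀ x, key x ≤ 1 → x = m₁ ∨ x = m₀ := by
    intro x h
    have := x.isLt
    simp only [hkeydef] at h
    split_ifs at h <;> first | (left; assumption) | (right; assumption) | omega
  have hk3 : ∀ x, key x = d + 3 → x = M₀ := by
    intro x h
    have := x.isLt
    simp only [hkeydef] at h
    split_ifs at h <;> first | assumption | omega
  have hk23 : ∀ x, d + 2 ≤ key x → x = M₁ ∨ x = M₀ := by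
    intro x h
    have := x.isLt
    simp only [hkeydef] at h
    split_ifs at h <;> first | (left; assumption) | (right; assumption) | omega
  -- the permutation
  set π := Tuple.sort key with hπdef
  have hmono : Monotone (key ∘ π) := Tuple.monotone_sort key
  have hlin : IsLinExt r π := by
    intro a b hr
    by_contra hab
    push_neg at hab
    exact absurd (hkeylt _ _ hr) (not_lt.mpr (hmono hab))
  -- special indices
  obtain ⟨i0, hi0v⟩ : ∃ i : Fin d, (i : ℕ) = 0 := ⟨⟨0, by omega⟩, rfl⟩
  obtain ⟨i1, hi1v⟩ : ∃ i : Fin d, (i : ℕ) = 1 := ⟨⟨1, by omega⟩, rfl⟩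
  obtain ⟨i2, hi2v⟩ : ∃ i : Fin d, (i : ℕ) = d - 2 := ⟨⟨d - 2, by omega⟩, rfl⟩
  obtain ⟨i3, hi3v⟩ : ∃ i : Fin d, (i : ℕ) = d - 1 := ⟨⟨d - 1, by omega⟩, rfl⟩
  have hπ0 : π i0 = m₁ := by
    have h1 : key (π i0) ≤ key (π (π.symm m₁)) := hmono (Fin.le_def.mpr (by omega))
    rw [Equiv.apply_symm_apply, hkm₁] at h1
    exact hk0 _ (Nat.le_zero.mp h1)
  have hπ1 : π i1 = m₀ := by
    have hb : (π.symm m₀ : ℕ) ≠ 0 := by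
      intro h
      have h2 : π.symm m₀ = i0 := Fin.ext (by omega)
      have h3 := hπ0
      rw [← h2, Equiv.apply_symm_apply] at h3
      exact hm01' h3
    have h1 : key (π i1) ≤ key (π (π.symm m₀)) := hmono (Fin.le_def.mpr (by omega))
    rw [Equiv.apply_symm_apply, hkm₀] at h1
    rcases hk01 _ h1 with h | h
    · exfalso
      have h4 : i1 = i0 := π.injective (by rw [hπ0, h])
      have := congrArg Fin.val h4
      omega
    · exact h
  have hπ3 : π i3 = M₀ := by
    have hlt := (π.symm M₀).isLt
    have h1 : key (π (π.symm M₀)) ≤ key (π i3) := hmono (Fin.le_def.mpr (by omega))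
    rw [Equiv.apply_symm_apply, hkM₀] at h1
    exact hk3 _ (le_antisymm (hkub _) h1)
  have hπ2 : π i2 = M₁ := by
    have hlt := (π.symm M₁).isLt
    have hb : (π.symm M₁ : ℕ) ≠ d - 1 := by
      intro h
      have h2 : π.symm M₁ = i3 := Fin.ext (by omega)
      have h3 := hπ3
      rw [← h2, Equiv.apply_symm_apply] at h3
      exact hM01' h3.symm
    have h1 : key (π (π.symm M₁)) ≤ key (π i2) := hmono (Fin.le_def.mpr (by omega))
    rw [Equiv.apply_symm_apply, hkM₁] at h1
    rcases hk23 _ h1 with h | h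
    · exact h
    · exfalso
      have h4 : i2 = i3 := π.injective (by rw [hπ3, h])
      have := congrArg Fin.val h4
      omega
  refine ⟨π, hlin, ?_⟩
  have hsub : ({i0, i2} : Finset (Fin d)) ⊆
      Finset.univ.filter fun j : Fin d =>
        ∃ hj : (j : ℕ) + 1 < d, π ⟨(j : ℕ) + 1, hj⟩ < π j := by
    intro j hj
    rw [Finset.mem_insert, Finset.mem_singleton] at hj
    rw [Finset.mem_filter]
    refine ⟨Finset.mem_univ _, ?_⟩
    rcases hj with rfl | rfl
    · refine ⟨by omega, ?_⟩
      have he : (⟨(j : ℕ) + 1, by omega⟩ : Fin d) = i1 := Fin.ext (show (j : ℕ) + 1 = (i1 : ℕ) by omega)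
      rw [he, hπ0, hπ1]
      exact hm01
    · refine ⟨by omega, ?_⟩
      have he : (⟨(j : ℕ) + 1, by omega⟩ : Fin d) = i3 := Fin.ext (show (j : ℕ) + 1 = (i3 : ℕ) by omega)
      rw [he, hπ2, hπ3]
      exact hM01
  have hne : i0 ≠ i2 := by
    intro h
    have := congrArg Fin.val h
    omega
  calc 2 = ({i0, i2} : Finset (Fin d)).card := (Finset.card_pair hne).symm
    _ ≤ _ := Finset.card_le_card hsub
end

section
/- Let P be a finite pure poset (all maximal chains have the same length) containing an antichain A of size 3 with A ≠ P, such that no element of P is comparable to all other elements of P (P is 'simple'), and P contains no antichain of size 4. Then P has a linear extension with at least 3 descents. -/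
open scoped Classical

noncomputable def ht {d : ℕ} (r : Fin d → Fin d → Prop) (x : Fin d) : ℕ :=
  ((Finset.univ.filter fun y => r y x ∧ y < x).attach.sup
    fun y => ht r y.1 + 1)
termination_by x.val
decreasing_by
  have hy := y.2
  simp only [Finset.mem_filter] at hy
  exact hy.2.2

lemma ht_eq {d : ℕ} (r : Fin d → Fin d → Prop) (x : Fin d) :
    ht r x = ((Finset.univ.filter fun y => r y x ∧ y < x).attach.sup
      fun y => ht r y.1 + 1) := by
  rw [ht]

lemma ht_lt {d : ℕ} (r : Fin d → Fin d → Prop)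
    (hcompat : ∀ a b : Fin d, r a b → a < b) {x y : Fin d} (h : r y x) :
    ht r y < ht r x := by
  have hy : y ∈ Finset.univ.filter fun z => r z x ∧ z < x := by
    simp [h, hcompat y x h]
  have := Finset.le_sup (f := fun z : {z // z ∈ Finset.univ.filter fun z => r z x ∧ z < x} => ht r z.1 + 1)
    (Finset.mem_attach _ ⟨y, hy⟩)
  rw [← ht_eq] at this
  have h2 : ht r y + 1 ≤ ht r x := this
  omega

lemma ht_exists {d : ℕ} (r : Fin d → Fin d → Prop) {x : Fin d} (h : 0 < ht r x) :
    ∃ y, r y x ∧ ht r y + 1 = ht r x := by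
  classical
  rw [ht_eq] at h
  rcases Finset.eq_empty_or_nonempty ((Finset.univ.filter fun y => r y x ∧ y < x)) with he | hne
  · rw [he] at h; simp at h
  · obtain ⟨b, hb, heq⟩ := Finset.exists_mem_eq_sup _ (hne.attach)
      (fun y : {z // z ∈ Finset.univ.filter fun z => r z x ∧ z < x} => ht r y.1 + 1)
    have hb' := b.2
    simp only [Finset.mem_filter] at hb'
    refine ⟨b.1, hb'.2.1, ?_⟩
    have heq2 : ht r x = ht r b.1 + 1 := by rw [ht_eq r x]; exact heq
    omega

def ChainF {d : ℕ} (r : Fin d → Fin d → Prop) (S : Finset (Fin d)) : Prop :=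
  ∀ a ∈ S, ∀ b ∈ S, a ≠ b → r a b ∨ r b a

lemma exists_chain_ht {d : ℕ} (r : Fin d → Fin d → Prop)
    (htrans : ∀ a b c : Fin d, r a b → r b c → r a c)
    (hcompat : ∀ a b : Fin d, r a b → a < b) (x : Fin d) :
    ∃ S : Finset (Fin d), ChainF r S ∧ S.card = ht r x + 1 ∧
      ∀ y ∈ S, y = x ∨ r y x := by
  suffices h : ∀ k : ℕ, ∀ x : Fin d, ht r x = k →
      ∃ S : Finset (Fin d), ChainF r S ∧ S.card = k + 1 ∧ ∀ y ∈ S, y = x ∨ r y x by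
    exact h (ht r x) x rfl
  intro k
  induction k with
  | zero =>
    intro x _
    refine ⟨{x}, ?_, by simp, by simp⟩
    intro a ha b hb hab
    simp at ha hb; exact absurd (ha.trans hb.symm) hab
  | succ k ih =>
    intro x hx
    obtain ⟨y, hyx, hy⟩ := ht_exists r (x := x) (by omega)
    obtain ⟨S', hS'chain, hS'card, hS'down⟩ := ih y (by omega)
    have hdown : ∀ z ∈ S', r z x := by
      intro z hz
      rcases hS'down z hz with h | h
      · rw [h]; exact hyx
      · exact htrans _ _ _ h hyx
    have hxS' : x ∉ S' := by
      intro hmem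
      exact absurd (hcompat x x (hdown x hmem)) (lt_irrefl x)
    refine ⟨insert x S', ?_, ?_, ?_⟩
    · intro a ha b hb hab
      rcases Finset.mem_insert.1 ha with rfl | ha'
      · rcases Finset.mem_insert.1 hb with rfl | hb'
        · exact absurd rfl hab
        · exact Or.inr (hdown b hb')
      · rcases Finset.mem_insert.1 hb with rfl | hb'
        · exact Or.inl (hdown a ha')
        · exact hS'chain a ha' b hb' hab
    · rw [Finset.card_insert_of_notMem hxS', hS'card]
    · intro z hz
      rcases Finset.mem_insert.1 hz with rfl | hz'
      · exact Or.inl rfl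
      · exact Or.inr (hdown z hz')

lemma exists_maxchainF {d : ℕ} (r : Fin d → Fin d → Prop)
    (S : Finset (Fin d)) (hS : ChainF r S) :
    ∃ T : Finset (Fin d), S ⊆ T ∧ ChainF r T ∧ IsMaxChain' r ↑T := by
  classical
  set F : Finset (Finset (Fin d)) :=
    Finset.univ.filter (fun T => ChainF r T ∧ S ⊆ T) with hF
  have hSF : S ∈ F := by simp [hF, hS]
  obtain ⟨T, hTF, hTmax⟩ := Finset.exists_max_image F Finset.card ⟨S, hSF⟩
  simp only [hF, Finset.mem_filter] at hTF
  refine ⟨T, hTF.2.2, hTF.2.1, ?_, ?_⟩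
  · intro a ha b hb hab
    exact hTF.2.1 a (by exact_mod_cast ha) b (by exact_mod_cast hb) hab
  · intro T' hT'chain hsub
    have hfin : T'.Finite := Set.toFinite T'
    set T'' := hfin.toFinset with hT''
    have hmemT'' : ∀ z, z ∈ T'' ↔ z ∈ T' := fun z => Set.Finite.mem_toFinset hfin
    have hTT'' : T ⊆ T'' := by
      intro z hz
      exact (hmemT'' z).2 (hsub (by exact_mod_cast hz))
    have hT''F : T'' ∈ F := by
      simp only [hF, Finset.mem_filter, Finset.mem_univ, true_and]
      constructor
      · intro a ha b hb hab
        exact hT'chain a ((hmemT'' a).1 ha) b ((hmemT'' b).1 hb) hab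
      · exact hTF.2.2.trans hTT''
    have hcard := hTmax T'' hT''F
    have : T = T'' := Finset.eq_of_subset_of_card_le hTT'' hcard
    rw [this]
    exact Set.Finite.coe_toFinset hfin

lemma maxchain_card_le {d : ℕ} (r : Fin d → Fin d → Prop)
    (hpure : IsPure' r) (hsimple : IsSimple' r)
    (A : Finset (Fin d)) (hA : IsAntichain' r A) (hA3 : A.card = 3)
    (hAne : A ≠ Finset.univ)
    (C : Finset (Fin d)) (hCchain : ChainF r C) (hCmax : IsMaxChain' r ↑C) :
    C.card + 3 ≤ d := by
  classical
  by_contra hcon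
  push_neg at hcon
  have hd2 : d ≤ C.card + 2 := by omega
  -- A ∩ C has at most one element
  have hAC : (A ∩ C).card ≤ 1 := by
    by_contra h1
    push_neg at h1
    obtain ⟨a, ha, b, hb, hab⟩ := Finset.one_lt_card.1 h1
    simp only [Finset.mem_inter] at ha hb
    rcases hCchain a ha.2 b hb.2 hab with h | h
    · exact (hA a ha.1 b hb.1 hab).1 h
    · exact (hA a ha.1 b hb.1 hab).2 h
  have hsplit : (A ∩ C).card + (A \ C).card = A.card := Finset.card_inter_add_card_sdiff A C
  have hAdC2 : 2 ≤ (A \ C).card := by omega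
  have hsub : A \ C ⊆ Cᶜ := by
    intro z hz
    simp only [Finset.mem_sdiff] at hz
    simp [Finset.mem_compl, hz.2]
  have hcompl : Cᶜ.card = d - C.card := by
    rw [Finset.card_compl, Fintype.card_fin]
  have hcompl2 : Cᶜ.card ≤ 2 := by omega
  have heqset : A \ C = Cᶜ := Finset.eq_of_subset_of_card_le hsub (by omega)
  have hcompl_card : Cᶜ.card = 2 := le_antisymm hcompl2 (heqset ▸ hAdC2)
  have hACcard : (A ∩ C).card = 1 := by
    rw [← heqset] at hcompl_card; omega
  obtain ⟨w, hw⟩ := Finset.card_eq_one.1 hACcard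
  obtain ⟨u, v, huv, huvset⟩ := Finset.card_eq_two.1 (heqset ▸ hcompl_card)
  have hwA : w ∈ A := by have := hw ▸ (Finset.mem_singleton_self w); exact (Finset.mem_inter.1 this).1
  have hwC : w ∈ C := by have := hw ▸ (Finset.mem_singleton_self w); exact (Finset.mem_inter.1 this).2
  have huA : u ∈ A := by
    have : u ∈ A \ C := huvset ▸ (by simp)
    exact (Finset.mem_sdiff.1 this).1
  have hvA : v ∈ A := by
    have : v ∈ A \ C := huvset ▸ (by simp)
    exact (Finset.mem_sdiff.1 this).1
  have huC : u ∉ C := by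
    have : u ∈ A \ C := huvset ▸ (by simp)
    exact (Finset.mem_sdiff.1 this).2
  have hvC : v ∉ C := by
    have : v ∈ A \ C := huvset ▸ (by simp)
    exact (Finset.mem_sdiff.1 this).2
  have hwu : w ≠ u := fun h => huC (h ▸ hwC)
  have hwv : w ≠ v := fun h => hvC (h ▸ hwC)
  -- every element not in C is u or v
  have hout : ∀ t : Fin d, t ∉ C → t = u ∨ t = v := by
    intro t ht
    have : t ∈ A \ C := heqset ▸ (by simp [Finset.mem_compl, ht])
    rw [huvset] at this
    simpa using this
  -- key step: for z ∈ {u,v}, every x ∈ C other than w is comparable to z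
  have key : ∀ z z' : Fin d, z ∉ C → z ≠ z' → (¬ r z z' ∧ ¬ r z' z) →
      (¬ r w z ∧ ¬ r z w) → (∀ t : Fin d, t ∉ C → t = z ∨ t = z') →
      ∀ x ∈ C, x ≠ w → r x z ∨ r z x := by
    intro z z' hzC hzz' hzz'inc hwzinc hall
    set Cz := C.filter (fun x => r x z ∨ r z x) with hCz
    have hzCz : z ∉ Cz := fun h => hzC (Finset.mem_filter.1 h).1
    have hSchain : ChainF r (insert z Cz) := by
      intro a ha b hb hab
      rcases Finset.mem_insert.1 ha with rfl | ha'
      · rcases Finset.mem_insert.1 hb with rfl | hb'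
        · exact absurd rfl hab
        · rcases (Finset.mem_filter.1 hb').2 with h | h
          · exact Or.inr h
          · exact Or.inl h
      · rcases Finset.mem_insert.1 hb with rfl | hb'
        · rcases (Finset.mem_filter.1 ha').2 with h | h
          · exact Or.inl h
          · exact Or.inr h
        · exact hCchain a (Finset.mem_filter.1 ha').1 b (Finset.mem_filter.1 hb').1 hab
    obtain ⟨T, hST, hTchain, hTmax⟩ := exists_maxchainF r (insert z Cz) hSchain
    have hzT : z ∈ T := hST (Finset.mem_insert_self z Cz)
    have hTS : T ⊆ insert z Cz := by
      intro t ht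
      by_cases htC : t ∈ C
      · have htz : t ≠ z := fun h => hzC (h ▸ htC)
        have hcomp := hTchain t ht z hzT htz
        exact Finset.mem_insert.2 (Or.inr (Finset.mem_filter.2 ⟨htC, hcomp⟩))
      · rcases hall t htC with rfl | rfl
        · exact Finset.mem_insert_self t Cz
        · exfalso
          rcases hTchain t ht z hzT (Ne.symm hzz') with h | h
          · exact hzz'inc.2 h
          · exact hzz'inc.1 h
    have hTeq : T = insert z Cz := Finset.Subset.antisymm hTS hST
    -- purity: T and C have the same cardinality
    have hcards : ((T : Set (Fin d))).ncard = ((C : Set (Fin d))).ncard := hpure _ _ hTmax hCmax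
    rw [Set.ncard_coe_finset, Set.ncard_coe_finset] at hcards
    have hCzcard : Cz.card + 1 = C.card := by
      have : T.card = Cz.card + 1 := by rw [hTeq, Finset.card_insert_of_notMem hzCz]
      omega
    -- the set of elements of C incomparable to z is a singleton, containing w
    have hfilters : Cz.card + (C.filter (fun x => ¬ (r x z ∨ r z x))).card = C.card := by
      rw [hCz]
      exact Finset.card_filter_add_card_filter_not _
    have hNone : (C.filter (fun x => ¬ (r x z ∨ r z x))).card = 1 := by omega
    obtain ⟨g, hg⟩ := Finset.card_eq_one.1 hNone
    have hwmem : w ∈ C.filter (fun x => ¬ (r x z ∨ r z x)) := by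
      refine Finset.mem_filter.2 ⟨hwC, ?_⟩
      rw [not_or]
      exact ⟨hwzinc.1, hwzinc.2⟩
    have hgw : g = w := by
      have := hg ▸ hwmem
      simpa using (Finset.mem_singleton.1 this).symm
    intro x hxC hxw
    by_contra hx
    push_neg at hx
    have : x ∈ C.filter (fun x => ¬ (r x z ∨ r z x)) :=
      Finset.mem_filter.2 ⟨hxC, by rw [not_or]; exact hx⟩
    rw [hg, hgw] at this
    exact hxw (Finset.mem_singleton.1 this)
  -- apply the key step to u and v
  have hAuw := hA u huA w hwA (Ne.symm hwu)
  have hAvw := hA v hvA w hwA (Ne.symm hwv)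
  have hAuv := hA u huA v hvA huv
  have keyu := key u v huC huv ⟨hAuv.1, hAuv.2⟩ ⟨hAuw.2, hAuw.1⟩ hout
  have keyv := key v u hvC (Ne.symm huv) ⟨hAuv.2, hAuv.1⟩ ⟨hAvw.2, hAvw.1⟩
    (fun t ht => (hout t ht).symm)
  -- C has at most one element
  have hC1 : C.card ≤ 1 := by
    by_contra h1
    push_neg at h1
    obtain ⟨x, hxC, hxw⟩ := Finset.exists_mem_ne h1 w
    obtain ⟨y, hyx, hy1, hy2⟩ := hsimple x
    by_cases hyC : y ∈ C
    · rcases hCchain x hxC y hyC (Ne.symm hyx) with h | h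
      · exact hy1 h
      · exact hy2 h
    · rcases hout y hyC with rfl | rfl
      · rcases keyu x hxC hxw with h | h
        · exact hy1 h
        · exact hy2 h
      · rcases keyv x hxC hxw with h | h
        · exact hy1 h
        · exact hy2 h
  -- conclude
  have hd3 : 3 ≤ d := by
    have := Finset.card_le_card (Finset.subset_univ A)
    rw [Finset.card_univ, Fintype.card_fin] at this
    omega
  have hdeq : d = 3 := by omega
  have : A = Finset.univ := Finset.eq_univ_of_card A (by rw [hA3, Fintype.card_fin, hdeq])
  exact hAne this

noncomputable def pkey {d : ℕ} (r : Fin d → Fin d → Prop) (x : Fin d) : ℕ :=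
  ht r x * d + (d - 1 - x.val)

lemma pkey_lt_of_ht_lt {d : ℕ} (r : Fin d → Fin d → Prop) {x y : Fin d}
    (h : ht r x < ht r y) : pkey r x < pkey r y := by
  have hx : (x : ℕ) < d := x.isLt
  unfold pkey
  calc ht r x * d + (d - 1 - x.val) < ht r x * d + d := by omega
    _ = (ht r x + 1) * d := by ring
    _ ≤ ht r y * d := Nat.mul_le_mul_right d h
    _ ≤ ht r y * d + (d - 1 - y.val) := Nat.le_add_right _ _

lemma ht_le_of_pkey_le {d : ℕ} (r : Fin d → Fin d → Prop) {x y : Fin d}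
    (h : pkey r x ≤ pkey r y) : ht r x ≤ ht r y := by
  by_contra hc
  push_neg at hc
  exact absurd h (not_le.2 (pkey_lt_of_ht_lt r hc))

lemma pkey_inj {d : ℕ} (r : Fin d → Fin d → Prop) {x y : Fin d}
    (hne : x ≠ y) : pkey r x ≠ pkey r y := by
  intro heq
  rcases lt_trichotomy (ht r x) (ht r y) with h | h | h
  · exact absurd heq (Nat.ne_of_lt (pkey_lt_of_ht_lt r h))
  · unfold pkey at heq
    rw [h] at heq
    have hx : (x : ℕ) < d := x.isLt
    have hy : (y : ℕ) < d := y.isLt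
    have : (x : ℕ) = (y : ℕ) := by omega
    exact hne (Fin.ext this)
  · exact absurd heq.symm (Nat.ne_of_lt (pkey_lt_of_ht_lt r h))

/-- Let `P` be a finite pure poset containing an antichain `A` of size `3` with
`A ≠ P`, such that no element of `P` is comparable to all others (simplicity) and `P`
has no antichain of size `4`.  Then `P` has a linear extension with at least three
descents. -/
theorem stmt_9 {d : ℕ} (r : Fin d → Fin d → Prop)
    (htrans : ∀ a b c : Fin d, r a b → r b c → r a c)
    (hcompat : ∀ a b : Fin d, r a b → a < b)
    (hpure : IsPure' r) (hsimple : IsSimple' r)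
    (A : Finset (Fin d)) (hA : IsAntichain' r A) (hA3 : A.card = 3)
    (hAne : A ≠ Finset.univ)
    (hno4 : ∀ B : Finset (Fin d), IsAntichain' r B → B.card ≤ 3) :
    ∃ π : Equiv.Perm (Fin d), IsLinExt r π ∧ 3 ≤ descents π := by
  classical
  have hbound : ∀ x : Fin d, ht r x + 4 ≤ d := by
    intro x
    obtain ⟨S, hSchain, hScard, _⟩ := exists_chain_ht r htrans hcompat x
    obtain ⟨T, hST, hTchain, hTmax⟩ := exists_maxchainF r S hSchain
    have h1 := maxchain_card_le r hpure hsimple A hA hA3 hAne T hTchain hTmax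
    have h2 := Finset.card_le_card hST
    omega
  have hd3 : 3 ≤ d := by
    have := Finset.card_le_card (Finset.subset_univ A)
    rw [Finset.card_univ, Fintype.card_fin] at this
    omega
  have hd4 : 4 ≤ d := by
    have := hbound ⟨0, by omega⟩
    omega
  set π : Equiv.Perm (Fin d) := Tuple.sort (pkey r) with hπ
  have hmono : Monotone (pkey r ∘ π) := Tuple.monotone_sort (pkey r)
  refine ⟨π, ?_, ?_⟩
  · -- linear extension
    intro a b hr
    have h1 : ht r (π a) < ht r (π b) := ht_lt r hcompat hr
    have h2 : pkey r (π a) < pkey r (π b) := pkey_lt_of_ht_lt r h1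
    by_contra hab
    push_neg at hab
    have := hmono hab
    simp only [Function.comp_apply] at this
    omega
  · -- descent count
    set f : Fin d → ℕ := fun j => ht r (π j) with hf
    set fnext : Fin d → ℕ :=
      fun j => if h : (j : ℕ) + 1 < d then ht r (π ⟨(j : ℕ) + 1, h⟩) else 0 with hfnext
    -- the basic step estimate
    have hstep : ∀ j : Fin d, ∀ hj : (j : ℕ) + 1 < d,
        f j ≤ fnext j ∧ pkey r (π j) < pkey r (π ⟨(j : ℕ) + 1, hj⟩) := by
      intro j hj
      have hmk : ((⟨(j : ℕ) + 1, hj⟩ : Fin d) : ℕ) = (j : ℕ) + 1 := rfl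
      have hle : j ≤ (⟨(j : ℕ) + 1, hj⟩ : Fin d) := by
        rw [Fin.le_def]; omega
      have hk := hmono hle
      simp only [Function.comp_apply] at hk
      have hne : π j ≠ π ⟨(j : ℕ) + 1, hj⟩ := by
        intro h
        have := π.injective h
        rw [Fin.ext_iff] at this
        omega
      have hk2 : pkey r (π j) < pkey r (π ⟨(j : ℕ) + 1, hj⟩) :=
        lt_of_le_of_ne hk (pkey_inj r hne)
      refine ⟨?_, hk2⟩
      have := ht_le_of_pkey_le r hk
      simp only [hf, hfnext, dif_pos hj]
      exact this
    set Jlt : Finset (Fin d) := Finset.univ.filter (fun j : Fin d => (j : ℕ) + 1 < d) with hJ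
    have hJcard : Jlt.card = d - 1 := by
      have h2 : (Finset.univ.filter fun j : Fin d => ¬((j : ℕ) + 1 < d)) =
          {(⟨d - 1, by omega⟩ : Fin d)} := by
        ext j
        simp only [Finset.mem_filter, Finset.mem_univ, true_and, Finset.mem_singleton,
          Fin.ext_iff]
        have := j.isLt
        omega
      have h3 := Finset.card_filter_add_card_filter_not
        (s := Finset.univ) (p := fun j : Fin d => (j : ℕ) + 1 < d)
      rw [h2, Finset.card_univ, Fintype.card_fin, Finset.card_singleton] at h3
      rw [hJ]
      omega
    set E : Finset (Fin d) := Jlt.filter (fun j => f j = fnext j) with hE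
    set N : Finset (Fin d) := Jlt.filter (fun j => ¬ f j = fnext j) with hN
    have hEN : E.card + N.card = Jlt.card :=
      Finset.card_filter_add_card_filter_not _
    -- N is small
    have hNcard : N.card ≤ d - 4 := by
      have hinj : Set.InjOn f ↑N := by
        intro j1 hj1 j2 hj2 heq
        simp only [hN, hJ, Finset.coe_filter, Set.mem_setOf_eq, Finset.mem_filter,
          Finset.mem_univ, true_and] at hj1 hj2
        obtain ⟨hd1, hne1⟩ := hj1
        obtain ⟨hd2, hne2⟩ := hj2
        by_contra hne12
        have hlem : ∀ a b : Fin d, ∀ hda : (a : ℕ) + 1 < d, (a : ℕ) < (b : ℕ) →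
            f a ≠ fnext a → f a < f b := by
          intro a b hda hab hnea
          have hmk : ((⟨(a : ℕ) + 1, hda⟩ : Fin d) : ℕ) = (a : ℕ) + 1 := rfl
          have h1 := (hstep a hda).1
          have h2 : f a < fnext a := lt_of_le_of_ne h1 hnea
          have hle : (⟨(a : ℕ) + 1, hda⟩ : Fin d) ≤ b := by
            rw [Fin.le_def]; omega
          have h3 := ht_le_of_pkey_le r (hmono hle)
          have h4 : fnext a = ht r (π ⟨(a : ℕ) + 1, hda⟩) := by
            simp only [hfnext, dif_pos hda]
          rw [h4] at h2
          exact lt_of_lt_of_le h2 h3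
        rcases Nat.lt_trichotomy (j1 : ℕ) (j2 : ℕ) with h | h | h
        · exact absurd heq (Nat.ne_of_lt (hlem j1 j2 hd1 h hne1))
        · exact hne12 (Fin.ext h)
        · exact absurd heq.symm (Nat.ne_of_lt (hlem j2 j1 hd2 h hne2))
      have hmaps : ∀ j ∈ N, f j ∈ Finset.range (d - 4) := by
        intro j hj
        simp only [hN, hJ, Finset.mem_filter, Finset.mem_univ, true_and] at hj
        obtain ⟨hdj, hnej⟩ := hj
        have h1 := (hstep j hdj).1
        have h2 : f j < fnext j := lt_of_le_of_ne h1 hnej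
        have h4 : fnext j = ht r (π ⟨(j : ℕ) + 1, hdj⟩) := by
          simp only [hfnext, dif_pos hdj]
        have h5 := hbound (π ⟨(j : ℕ) + 1, hdj⟩)
        rw [Finset.mem_range]
        omega
      have := Finset.card_le_card_of_injOn f hmaps hinj
      rw [Finset.card_range] at this
      exact this
    have hEcard : 3 ≤ E.card := by omega
    -- E consists of descents
    have hsub : E ⊆ Finset.univ.filter fun j : Fin d =>
        ∃ hj : (j : ℕ) + 1 < d, π ⟨(j : ℕ) + 1, hj⟩ < π j := by
      intro j hj
      simp only [hE, hJ, Finset.mem_filter, Finset.mem_univ, true_and] at hj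
      obtain ⟨hdj, heqj⟩ := hj
      have hmk : ((⟨(j : ℕ) + 1, hdj⟩ : Fin d) : ℕ) = (j : ℕ) + 1 := rfl
      refine Finset.mem_filter.2 ⟨Finset.mem_univ _, hdj, ?_⟩
      have h4 : fnext j = ht r (π ⟨(j : ℕ) + 1, hdj⟩) := by
        simp only [hfnext, dif_pos hdj]
      have hhteq : ht r (π j) = ht r (π ⟨(j : ℕ) + 1, hdj⟩) := by
        rw [← h4]; exact heqj
      have hk2 := (hstep j hdj).2
      unfold pkey at hk2
      rw [hhteq] at hk2
      have hb1 : ((π j : Fin d) : ℕ) < d := (π j).isLt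
      have hb2 : ((π ⟨(j : ℕ) + 1, hdj⟩ : Fin d) : ℕ) < d := (π ⟨(j : ℕ) + 1, hdj⟩).isLt
      rw [Fin.lt_def]
      omega
    have : descents π = (Finset.univ.filter fun j : Fin d =>
        ∃ hj : (j : ℕ) + 1 < d, π ⟨(j : ℕ) + 1, hj⟩ < π j).card := rfl
    rw [this]
    exact hEcard.trans (Finset.card_le_card hsub)
end

section
/- Let P be a finite pure poset with no antichain of size 3, in which some maximal chain has cardinality at least 3, and such that no element of P is comparable to all others. Then P admits a linear extension with at least 3 descents. -/
open scoped Classical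

/-!
Sort the elements by height, breaking ties by decreasing label. This is a linear extension, and
two consecutive elements of equal height form a descent, so every height level with at least two
elements contributes a descent. In a pure poset every maximal chain meets each of the levels
`1, …, n`, where `n` is the common size of the maximal chains. Given `x` of height `k ≤ n`,
choose `y` incomparable to `x` and a maximal chain through `y`; its element of height `k` is
comparable to `y`, hence differs from `x`. So the levels `1, 2, 3` each hold two elements.
-/

open Finset

namespace PurePoset

variable {d : ℕ}

section Height

variable (r : Fin d → Fin d → Prop)

noncomputable def chainsBelow (x : Fin d) : Finset (Finset (Fin d)) :=
  ((univ.filter fun y => y = x ∨ r y x).powerset).filter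
    fun C : Finset (Fin d) => IsChain r (C : Set (Fin d))

-- Minimal elements have height `1`, matching the cardinality convention for chains.
noncomputable def height (x : Fin d) : ℕ :=
  (chainsBelow r x).sup card

variable {r}

theorem mem_chainsBelow {x : Fin d} {C : Finset (Fin d)} :
    C ∈ chainsBelow r x ↔ IsChain r (C : Set (Fin d)) ∧ ∀ a ∈ C, a = x ∨ r a x := by
  simp [chainsBelow, subset_iff, and_comm]

theorem card_le_height {x : Fin d} {C : Finset (Fin d)} (hC : IsChain r (C : Set (Fin d)))
    (hCx : ∀ a ∈ C, a = x ∨ r a x) : C.card ≤ height r x :=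
  le_sup (mem_chainsBelow.2 ⟨hC, hCx⟩)

theorem exists_chain_card_eq_height (x : Fin d) :
    ∃ C : Finset (Fin d), IsChain r (C : Set (Fin d)) ∧ (∀ a ∈ C, a = x ∨ r a x) ∧
      C.card = height r x := by
  obtain ⟨C, hC, hcard⟩ :=
    exists_mem_eq_sup (chainsBelow r x) ⟨∅, mem_chainsBelow.2 ⟨by simp, by simp⟩⟩ card
  exact ⟨C, (mem_chainsBelow.1 hC).1, (mem_chainsBelow.1 hC).2, hcard.symm⟩

theorem one_le_height (x : Fin d) : 1 ≤ height r x := by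
  simpa using card_le_height (r := r) (C := {x}) (by simp) (by simp)

theorem height_lt_height (htrans : ∀ a b c, r a b → r b c → r a c) (hirr : ∀ a, ¬ r a a)
    {u v : Fin d} (huv : r u v) : height r u < height r v := by
  obtain ⟨C, hC, hCu, hcard⟩ := exists_chain_card_eq_height (r := r) u
  have hCv : ∀ a ∈ C, r a v := fun a ha => (hCu a ha).elim (· ▸ huv) (htrans a u v · huv)
  have hvC : v ∉ C := fun hv => hirr v (hCv v hv)
  have hchain : IsChain r (insert v C : Finset (Fin d)) := by
    rw [coe_insert]
    exact hC.insert fun a ha _ => Or.inr (hCv a ha)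
  have := card_le_height hchain fun a ha => (mem_insert.1 ha).imp id (hCv a)
  rw [card_insert_of_notMem hvC] at this
  omega

theorem isMaxChain'_of_isMaxChain {M : Set (Fin d)} (hM : IsMaxChain r M) : IsMaxChain' r M :=
  ⟨fun _ ha _ hb hab => hM.1 ha hb hab,
    fun _ hT hMT => hM.2 (fun _ ha _ hb hab => hT _ ha _ hb hab) hMT⟩

theorem height_le_ncard (hpure : IsPure' r) {M : Set (Fin d)} (hM : IsMaxChain' r M)
    (x : Fin d) : height r x ≤ M.ncard := by
  obtain ⟨C, hC, hCx, hcard⟩ := exists_chain_card_eq_height (r := r) x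
  obtain ⟨N, hN, hCN⟩ := hC.exists_maxChain
  rw [← hcard, ← hpure N M (isMaxChain'_of_isMaxChain hN) hM, ← Set.ncard_coe_finset]
  exact Set.ncard_le_ncard hCN

/-- The elements of `M` have distinct heights, all in `[1, M.ncard]`. -/
theorem exists_mem_height_eq (htrans : ∀ a b c, r a b → r b c → r a c) (hirr : ∀ a, ¬ r a a)
    (hpure : IsPure' r) {M : Set (Fin d)} (hM : IsMaxChain' r M) {k : ℕ} (hk₁ : 1 ≤ k)
    (hk₂ : k ≤ M.ncard) : ∃ x ∈ M, height r x = k := by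
  have hinj : ∀ a b, a ∈ M.toFinset → b ∈ M.toFinset → height r a = height r b → a = b := by
    intro a b ha hb hab
    by_contra hne
    rcases hM.1 a (Set.mem_toFinset.1 ha) b (Set.mem_toFinset.1 hb) hne with h | h
    · exact (height_lt_height htrans hirr h).ne hab
    · exact (height_lt_height htrans hirr h).ne' hab
  obtain ⟨x, hx, hxk⟩ := surj_on_of_inj_on_of_card_le (s := M.toFinset) (t := Icc 1 M.ncard)
    (fun a _ => height r a)
    (fun a _ => mem_Icc.2 ⟨one_le_height a, height_le_ncard hpure hM a⟩) hinj
    (by rw [Nat.card_Icc, Set.ncard_eq_toFinset_card']; omega) k (mem_Icc.2 ⟨hk₁, hk₂⟩)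
  exact ⟨x, Set.mem_toFinset.1 hx, hxk.symm⟩

theorem exists_ne_height_eq (htrans : ∀ a b c, r a b → r b c → r a c) (hirr : ∀ a, ¬ r a a)
    (hpure : IsPure' r) (hsimple : IsSimple' r) {S : Set (Fin d)} (hS : IsMaxChain' r S)
    {k : ℕ} (hk₁ : 1 ≤ k) (hk₂ : k ≤ S.ncard) :
    ∃ x y, x ≠ y ∧ height r x = k ∧ height r y = k := by
  obtain ⟨x, -, hx⟩ := exists_mem_height_eq htrans hirr hpure hS hk₁ hk₂
  obtain ⟨y, hyx, hxy, hyx'⟩ := hsimple x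
  obtain ⟨N, hN, hyN⟩ := (IsChain.singleton (r := r) (a := y)).exists_maxChain
  obtain ⟨z, hzN, hz⟩ := exists_mem_height_eq htrans hirr hpure (isMaxChain'_of_isMaxChain hN)
    hk₁ (hpure S N hS (isMaxChain'_of_isMaxChain hN) ▸ hk₂)
  refine ⟨x, z, ?_, hx, hz⟩
  rintro rfl
  rcases hN.1 hzN (hyN rfl) (Ne.symm hyx) with h | h
  exacts [hxy h, hyx' h]

end Height

section LevelSort

variable {β : Type*} (g : Fin d → β)

def levelKey (x : Fin d) : β ×ₗ (Fin d)ᵒᵈ :=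
  toLex (g x, OrderDual.toDual x)

theorem levelKey_injective : Function.Injective (levelKey g) := fun _ _ h =>
  congrArg (fun p : β ×ₗ (Fin d)ᵒᵈ => OrderDual.ofDual (ofLex p).2) h

variable [LinearOrder β]

noncomputable def levelSort : Equiv.Perm (Fin d) :=
  Tuple.sort (levelKey g)

theorem strictMono_levelSort : StrictMono (levelKey g ∘ levelSort g) :=
  (Tuple.monotone_sort _).strictMono_of_injective
    ((levelKey_injective g).comp (levelSort g).injective)

variable {g}

theorem isLinExt_levelSort {r : Fin d → Fin d → Prop} (hg : ∀ a b, r a b → g a < g b) :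
    IsLinExt r (levelSort g) := fun _ _ hab =>
  (strictMono_levelSort g).lt_iff_lt.1 (Prod.Lex.toLex_lt_toLex.2 (Or.inl (hg _ _ hab)))

theorem exists_descent_of_lt {i k : Fin d} (hik : i < k)
    (hg : g (levelSort g i) = g (levelSort g k)) :
    ∃ hj : (i : ℕ) + 1 < d, levelSort g ⟨i + 1, hj⟩ < levelSort g i := by
  have hj : (i : ℕ) + 1 < d := by omega
  set j : Fin d := ⟨i + 1, hj⟩
  have hij := strictMono_levelSort g (show i < j from Fin.lt_def.2 (Nat.lt_succ_self _))
  have hjk := (strictMono_levelSort g).monotone (show j ≤ k from Fin.le_def.2 hik)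
  have hgj : g (levelSort g i) = g (levelSort g j) :=
    le_antisymm (Prod.Lex.monotone_fst _ _ hij.le) (hg ▸ Prod.Lex.monotone_fst _ _ hjk)
  refine ⟨hj, ?_⟩
  rcases Prod.Lex.toLex_lt_toLex.1 hij with h | ⟨-, h⟩
  exacts [absurd hgj h.ne, h]

theorem exists_descent_of_ne {x y : Fin d} (hxy : x ≠ y) (hg : g x = g y) :
    ∃ i : Fin d, (∃ hj : (i : ℕ) + 1 < d, levelSort g ⟨i + 1, hj⟩ < levelSort g i) ∧
      g (levelSort g i) = g x := by
  set σ := levelSort g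
  have hne : σ.symm x ≠ σ.symm y := σ.symm.injective.ne hxy
  rcases hne.lt_or_gt with h | h
  · exact ⟨σ.symm x, exists_descent_of_lt h (by simpa [σ] using hg), by simp [σ]⟩
  · exact ⟨σ.symm y, exists_descent_of_lt h (by simpa [σ] using hg.symm), by simp [σ, hg]⟩

theorem card_le_descents_levelSort {s : Finset β}
    (hs : ∀ b ∈ s, ∃ x y, x ≠ y ∧ g x = b ∧ g y = b) : s.card ≤ descents (levelSort g) := by
  unfold descents
  refine (card_le_card (t := (univ.filter _).image (g ∘ levelSort g)) fun b hb => ?_).trans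
    card_image_le
  obtain ⟨x, y, hxy, hx, hy⟩ := hs b hb
  obtain ⟨i, hi, hix⟩ := exists_descent_of_ne hxy (hx.trans hy.symm)
  exact mem_image.2 ⟨i, mem_filter.2 ⟨mem_univ i, hi⟩, hix.trans hx⟩

end LevelSort

end PurePoset

open PurePoset

theorem stmt_10_general {d : ℕ} (r : Fin d → Fin d → Prop)
    (htrans : ∀ a b c : Fin d, r a b → r b c → r a c)
    (hcompat : ∀ a b : Fin d, r a b → a < b)
    (hpure : IsPure' r) (hsimple : IsSimple' r)
    (S : Set (Fin d)) (hS : IsMaxChain' r S) (hS3 : 3 ≤ S.ncard) :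
    ∃ π : Equiv.Perm (Fin d), IsLinExt r π ∧ 3 ≤ descents π := by
  have hirr : ∀ a, ¬ r a a := fun a h => (hcompat a a h).false
  refine ⟨levelSort (height r), isLinExt_levelSort fun _ _ => height_lt_height htrans hirr, ?_⟩
  have hlevels : ∀ k ∈ ({1, 2, 3} : Finset ℕ),
      ∃ x y, x ≠ y ∧ height r x = k ∧ height r y = k := by
    intro k hk
    simp only [mem_insert, mem_singleton] at hk
    exact exists_ne_height_eq htrans hirr hpure hsimple hS (by omega) (by omega)
  simpa using card_le_descents_levelSort hlevels

/-- Let `P` be a finite pure poset with no antichain of size `3`, having a maximal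
chain of cardinality at least `3`, and such that no element of `P` is comparable to
all others.  Then `P` admits a linear extension with at least three descents. -/
theorem stmt_10 {d : ℕ} (r : Fin d → Fin d → Prop)
    (htrans : ∀ a b c : Fin d, r a b → r b c → r a c)
    (hcompat : ∀ a b : Fin d, r a b → a < b)
    (hpure : IsPure' r) (hsimple : IsSimple' r)
    (hno3 : ∀ A : Finset (Fin d), IsAntichain' r A → A.card ≤ 2)
    (S : Set (Fin d)) (hS : IsMaxChain' r S) (hS3 : 3 ≤ S.ncard) :
    ∃ π : Equiv.Perm (Fin d), IsLinExt r π ∧ 3 ≤ descents π :=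
  stmt_10_general r htrans hcompat hpure hsimple S hS hS3
end

section
/- Let L = J(P) be a finite distributive lattice and suppose every linear extension of P has at most one descent. Then P has no antichain of size 3. -/
/-!
Label an antichain of size three as `x < y < z`. List first the elements that are neither among
`x, y, z` nor above one of them (a down-set), then `z, y, x`, then the elements above one of
them (an up-set), each block in increasing label order. This is a linear extension, and the
run `z y x` in it gives two descents.
-/

open scoped Classical

lemma Finset.exists_lt_lt_of_two_lt_card {α : Type*} [LinearOrder α] {s : Finset α}
    (hs : 2 < s.card) : ∃ x ∈ s, ∃ y ∈ s, ∃ z ∈ s, x < y ∧ y < z := by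
  obtain ⟨t, hts, ht⟩ := Finset.exists_subset_card_eq hs
  let e := t.orderIsoOfFin ht
  exact ⟨e 0, hts (e 0).2, e 1, hts (e 1).2, e 2, hts (e 2).2,
    e.strictMono (by decide), e.strictMono (by decide)⟩

section LinearExtension

variable {d : ℕ} {β : Type*} [LinearOrder β]

lemma isLinExt_sort (r : Fin d → Fin d → Prop) {k : Fin d → β}
    (hk : ∀ a b, r a b → k a < k b) : IsLinExt r (Tuple.sort k) := by
  intro a b hab
  by_contra! hba
  exact (Tuple.monotone_sort k hba).not_gt (hk _ _ hab)

lemma sort_symm_eq_succ {k : Fin d → β} (hk : Function.Injective k) {u v : Fin d}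
    (huv : k u < k v) (hgap : ∀ w, k u < k w → k v ≤ k w) :
    ((Tuple.sort k).symm v : ℕ) = (Tuple.sort k).symm u + 1 := by
  set σ := Tuple.sort k
  have hσ : StrictMono (k ∘ σ) :=
    (Tuple.monotone_sort k).strictMono_of_injective (hk.comp σ.injective)
  have hij : σ.symm u < σ.symm v := hσ.lt_iff_lt.1 (by simpa using huv)
  by_contra hne
  let p : Fin d := ⟨σ.symm u + 1, by omega⟩
  have hup : k u < k (σ p) := by simpa using hσ (show σ.symm u < p by simp [Fin.lt_def, p])
  have hpv : k (σ p) < k v := by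
    simpa using hσ (show p < σ.symm v by simp only [Fin.lt_def, p] at hij ⊢; omega)
  exact (hgap _ hup).not_gt hpv

lemma sort_symm_lex_eq_succ {b : Fin d → ℕ} {u v : Fin d}
    (hu : ∀ w, b w = b u → w = u) (hv : ∀ w, b w = b v → w = v) (huv : b v = b u + 1) :
    ((Tuple.sort fun w => toLex (b w, w)).symm v : ℕ) =
      (Tuple.sort fun w => toLex (b w, w)).symm u + 1 := by
  refine sort_symm_eq_succ (fun _ _ h => congrArg (fun p => (ofLex p).2) h)
    (Prod.Lex.toLex_lt_toLex.2 (Or.inl (by omega))) fun w hw => ?_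
  rcases Prod.Lex.toLex_lt_toLex.1 hw with hlt | ⟨heq, hlt⟩
  · rcases (Nat.succ_le_of_lt hlt).eq_or_lt with hsucc | hgt
    · rw [hv w (by omega)]
    · exact (Prod.Lex.toLex_lt_toLex.2 (Or.inl (by omega))).le
  · exact absurd (hu w heq.symm ▸ hlt) (lt_irrefl u)

lemma two_le_descents_of_consecutive {π : Equiv.Perm (Fin d)} {x y z : Fin d}
    (hxy : x < y) (hyz : y < z)
    (hzy : (π.symm y : ℕ) = π.symm z + 1) (hyx : (π.symm x : ℕ) = π.symm y + 1) :
    2 ≤ descents π := by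
  have hdesc : ∀ {u v : Fin d}, v < u → (π.symm v : ℕ) = π.symm u + 1 →
      π.symm u ∈ Finset.univ.filter fun j : Fin d =>
        ∃ hj : (j : ℕ) + 1 < d, π ⟨(j : ℕ) + 1, hj⟩ < π j := by
    intro u v hvu huv
    refine Finset.mem_filter.2 ⟨Finset.mem_univ _, huv ▸ (π.symm v).2, ?_⟩
    rwa [show (⟨_, _⟩ : Fin d) = π.symm v from Fin.ext huv.symm, π.apply_symm_apply,
      π.apply_symm_apply]
  have hne : π.symm z ≠ π.symm y := Fin.ne_of_val_ne (by omega)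
  exact Finset.one_lt_card.2 ⟨_, hdesc hyz hzy, _, hdesc hxy hyx, hne⟩

end LinearExtension

section TripleLayer

variable {d : ℕ} (r : Fin d → Fin d → Prop) (x y z : Fin d)

noncomputable def tripleLayer (u : Fin d) : ℕ :=
  if r x u ∨ r y u ∨ r z u then 4 else if u = x then 3 else if u = y then 2
  else if u = z then 1 else 0

variable {r x y z}

lemma tripleLayer_le_of_rel (htrans : ∀ a b c, r a b → r b c → r a c) {u v : Fin d}
    (huv : r u v) : tripleLayer r x y z u ≤ tripleLayer r x y z v := by
  unfold tripleLayer
  split_ifs <;> grind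

lemma eq_of_tripleLayer_eq_one {u : Fin d} (h : tripleLayer r x y z u = 1) : u = z := by
  unfold tripleLayer at h
  split_ifs at h <;> grind

lemma eq_of_tripleLayer_eq_two {u : Fin d} (h : tripleLayer r x y z u = 2) : u = y := by
  unfold tripleLayer at h
  split_ifs at h <;> grind

lemma eq_of_tripleLayer_eq_three {u : Fin d} (h : tripleLayer r x y z u = 3) : u = x := by
  unfold tripleLayer at h
  split_ifs at h <;> grind

lemma tripleLayer_of_isAntichain {A : Finset (Fin d)} (hA : IsAntichain' r A)
    (hirr : ∀ a, ¬ r a a) (hx : x ∈ A) (hy : y ∈ A) (hz : z ∈ A)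
    (hxy : x < y) (hyz : y < z) :
    tripleLayer r x y z x = 3 ∧ tripleLayer r x y z y = 2 ∧ tripleLayer r x y z z = 1 := by
  have hxy' := hA x hx y hy hxy.ne
  have hyz' := hA y hy z hz hyz.ne
  have hxz' := hA x hx z hz (hxy.trans hyz).ne
  simp [tripleLayer, hirr, hxy', hyz', hxz', hxy.ne', hyz.ne', (hxy.trans hyz).ne']

end TripleLayer

/-- If every linear extension of the finite poset `P` has at most one descent, then
`P` has no antichain of size three. -/
theorem stmt_13 {d : ℕ} (r : Fin d → Fin d → Prop)
    (htrans : ∀ a b c : Fin d, r a b → r b c → r a c)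
    (hcompat : ∀ a b : Fin d, r a b → a < b)
    (hext : ∀ π : Equiv.Perm (Fin d), IsLinExt r π → descents π ≤ 1) :
    ∀ A : Finset (Fin d), IsAntichain' r A → A.card ≤ 2 := by
  intro A hA
  by_contra! hcard
  obtain ⟨x, hx, y, hy, z, hz, hxy, hyz⟩ := Finset.exists_lt_lt_of_two_lt_card hcard
  obtain ⟨hℓx, hℓy, hℓz⟩ := tripleLayer_of_isAntichain hA
    (fun a h => lt_irrefl a (hcompat a a h)) hx hy hz hxy hyz
  have hlin : IsLinExt r (Tuple.sort fun u => toLex (tripleLayer r x y z u, u)) :=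
    isLinExt_sort r fun a b hab => Prod.Lex.toLex_lt_toLex.2 <|
      (tripleLayer_le_of_rel htrans hab).lt_or_eq.imp id fun h => ⟨h, hcompat a b hab⟩
  have hzy := sort_symm_lex_eq_succ (fun w hw => eq_of_tripleLayer_eq_one (hw.trans hℓz))
    (fun w hw => eq_of_tripleLayer_eq_two (hw.trans hℓy)) (by rw [hℓy, hℓz])
  have hyx := sort_symm_lex_eq_succ (fun w hw => eq_of_tripleLayer_eq_two (hw.trans hℓy))
    (fun w hw => eq_of_tripleLayer_eq_three (hw.trans hℓx)) (by rw [hℓx, hℓy])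
  exact (hext _ hlin).not_gt (two_le_descents_of_consecutive hxy hyz hzy hyx)
end

section
/- Let S be a polynomial ring over an infinite field and I ⊆ S a non-principal graded ideal generated in degree 2 with S/I Gorenstein. Then I is extremal Gorenstein (reg S/I = 2) if and only if the h-vector of S/I has the form (1, q, 1, 0, ..., 0) with q > 1. -/
open MvPolynomial

/-- The degree-`n` graded piece of `S/J`, where `S = K[x_1,…,x_N]`: the image in the
quotient of the space of homogeneous polynomials of degree `n`. -/
noncomputable def gradedPiece (K : Type*) [Field K] {N : ℕ}
    (J : Ideal (MvPolynomial (Fin N) K)) (n : ℕ) :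
    Submodule K (MvPolynomial (Fin N) K ⧸ J) :=
  Submodule.map (Ideal.Quotient.mkₐ K J).toLinearMap (homogeneousSubmodule (Fin N) K n)

/-- `L` is a regular sequence on `S/I`: each `L k` is a nonzerodivisor modulo `I`
together with the previous elements of `L`, and the quotient by all of them is
nonzero. -/
def IsRegularSeq (K : Type*) [Field K] {N : ℕ} (I : Ideal (MvPolynomial (Fin N) K))
    (L : List (MvPolynomial (Fin N) K)) : Prop :=
  (∀ k : ℕ, ∀ hk : k < L.length, ∀ f : MvPolynomial (Fin N) K,
      L.get ⟨k, hk⟩ * f ∈ I ⊔ Ideal.span {g | g ∈ L.take k} →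
        f ∈ I ⊔ Ideal.span {g | g ∈ L.take k}) ∧
  I ⊔ Ideal.span {g | g ∈ L} ≠ ⊤

/-- The Hilbert series of `S/J` as a formal power series over `ℤ`. -/
noncomputable def hilbertSeries (K : Type*) [Field K] {N : ℕ}
    (J : Ideal (MvPolynomial (Fin N) K)) : PowerSeries ℤ :=
  PowerSeries.mk fun n => (Module.finrank K (gradedPiece K J n) : ℤ)

/-!
For a linear regular sequence of length `c`, the Hilbert series of `S/I` times `(1 - t)^c` is the
Hilbert series of the Artinian reduction `A`, so the h-vector is the Hilbert function of `A`.
If `A₃ = 0`, then `A₂` lies in the socle, which is one-dimensional, so `h₂ = 1`. Cutting by a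
linear nonzerodivisor leaves `dim (S/J)₂ - C(dim (S/J)₁ + 1, 2)` unchanged; as `I` contains no
linear forms, `h₁ ≤ 1 ≤ h₂` would force `dim (S/I)₂ ≥ C(N + 1, 2) ≥ dim S₂`, so `I₂ = 0` and
`I = 0` would be principal.
-/

open Module

section HomogeneousComponent

variable {σ R : Type*} [CommSemiring R]

theorem homogeneousComponent_mul_of_isHomogeneous {g : MvPolynomial σ R} {m : ℕ}
    (hg : g.IsHomogeneous m) (s : MvPolynomial σ R) (n : ℕ) :
    homogeneousComponent n (s * g) =
      if m ≤ n then homogeneousComponent (n - m) s * g else 0 := by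
  induction s using MvPolynomial.induction_on' with
  | monomial d c =>
    have hd : (monomial d c * g).IsHomogeneous (d.degree + m) :=
      (isHomogeneous_monomial c rfl).mul hg
    rw [homogeneousComponent_of_mem hd,
      homogeneousComponent_of_mem (isHomogeneous_monomial c rfl)]
    split_ifs <;> first | (exfalso; omega) | rfl
  | add p q hp hq =>
    rw [add_mul, map_add, hp, hq]
    split_ifs <;> simp [add_mul]

theorem homogeneousComponent_eq_zero_of_mem_span {T : Set (MvPolynomial σ R)} {m : ℕ}
    (hT : ∀ g ∈ T, g.IsHomogeneous m) {p : MvPolynomial σ R} (hp : p ∈ Ideal.span T)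
    {n : ℕ} (hn : n < m) : homogeneousComponent n p = 0 := by
  obtain ⟨k, f, g, rfl⟩ := Submodule.mem_span_set'.1 hp
  simp only [smul_eq_mul, map_sum]
  refine Finset.sum_eq_zero fun i _ => ?_
  rw [homogeneousComponent_mul_of_isHomogeneous (hT _ (g i).2), if_neg (by omega)]

end HomogeneousComponent

theorem LinearMap.finrank_map_add_finrank_inf_ker {K V W : Type*} [DivisionRing K]
    [AddCommGroup V] [Module K V] [AddCommGroup W] [Module K W] (f : V →ₗ[K] W)
    (P : Submodule K V) [FiniteDimensional K P] :
    finrank K (P.map f) + finrank K ↥(P ⊓ LinearMap.ker f) = finrank K P := by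
  rw [← LinearMap.range_domRestrict, ← (f.domRestrict P).finrank_range_add_finrank_ker,
    LinearMap.ker_domRestrict, ← (Submodule.comapSubtypeEquivOfLe inf_le_left).finrank_eq,
    Submodule.comap_inf, Submodule.comap_subtype_self, top_inf_eq]

section GradedPiece

variable {K : Type*} [Field K] {N : ℕ}

local notation "S" => MvPolynomial (Fin N) K
local notation "HS" => homogeneousSubmodule (Fin N) K

instance (n : ℕ) : FiniteDimensional K (HS n) :=
  Submodule.finiteDimensional_of_le (fun _ hp => (mem_restrictTotalDegree _ _ _).2
    (IsHomogeneous.totalDegree_le hp) : HS n ≤ restrictTotalDegree (Fin N) K n)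

instance (J : Ideal S) (n : ℕ) : FiniteDimensional K (gradedPiece K J n) := by
  unfold gradedPiece; infer_instance

attribute [local instance] MvPolynomial.gradedAlgebra

theorem gradedPiece_zero (J : Ideal S) : gradedPiece K J 0 = K ∙ 1 := by
  rw [gradedPiece, homogeneousSubmodule_zero, Submodule.one_eq_span, Submodule.map_span,
    Set.image_singleton, AlgHom.toLinearMap_apply, map_one]

theorem finrank_gradedPiece_zero {J : Ideal S} (hJ : J ≠ ⊤) :
    finrank K (gradedPiece K J 0) = 1 := by
  have := Ideal.Quotient.nontrivial_iff.2 hJ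
  rw [gradedPiece_zero, finrank_span_singleton one_ne_zero]

theorem finrank_gradedPiece_add_finrank_inf (J : Ideal S) (n : ℕ) :
    finrank K (gradedPiece K J n) + finrank K ↥(HS n ⊓ J.restrictScalars K) =
      finrank K (HS n) := by
  have h :=
    LinearMap.finrank_map_add_finrank_inf_ker (Ideal.Quotient.mkₐ K J).toLinearMap (HS n)
  rwa [show LinearMap.ker (Ideal.Quotient.mkₐ K J).toLinearMap = J.restrictScalars K by
    ext; simp [Ideal.Quotient.eq_zero_iff_mem]] at h

theorem gradedPiece_map_factorₐ {J J' : Ideal S} (h : J ≤ J') (n : ℕ) :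
    (gradedPiece K J n).map (Ideal.Quotient.factorₐ K h).toLinearMap = gradedPiece K J' n := by
  rw [gradedPiece, gradedPiece, ← Submodule.map_comp]
  rfl

theorem gradedPiece_succ_inf_ker_factorₐ {J : Ideal S} (hJ : J.IsHomogeneous HS) {l : S}
    (hl : l.IsHomogeneous 1) (n : ℕ) :
    gradedPiece K J (n + 1) ⊓
        LinearMap.ker
          (Ideal.Quotient.factorₐ K (le_sup_left : J ≤ J ⊔ Ideal.span {l})).toLinearMap =
      (gradedPiece K J n).map (LinearMap.mulLeft K (Ideal.Quotient.mk J l)) := by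
  apply le_antisymm
  · rintro _ ⟨⟨x, hx, rfl⟩, hker⟩
    have hx' : x ∈ J ⊔ Ideal.span {l} := Ideal.Quotient.eq_zero_iff_mem.1 hker
    obtain ⟨j, hj, _, hsl, rfl⟩ := Submodule.mem_sup.1 hx'
    obtain ⟨s, rfl⟩ := Ideal.mem_span_singleton'.1 hsl
    -- only the degree-`n` part of the cofactor `s` survives in degree `n + 1`
    have hdeg : j + s * l = homogeneousComponent (n + 1) j + homogeneousComponent n s * l := by
      rw [← homogeneousComponent_eq_self hx, map_add,
        homogeneousComponent_mul_of_isHomogeneous hl, if_pos (by omega), Nat.add_sub_cancel]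
    refine ⟨Ideal.Quotient.mk J (homogeneousComponent n s),
      ⟨_, homogeneousComponent_mem n s, rfl⟩, ?_⟩
    change _ = Ideal.Quotient.mk J (j + s * l)
    rw [hdeg, map_add,
      Ideal.Quotient.eq_zero_iff_mem.2 (homogeneousComponent_mem_of_mem hJ hj _), zero_add,
      map_mul, mul_comm]
    rfl
  · rintro _ ⟨_, ⟨y, hy, rfl⟩, rfl⟩
    refine ⟨⟨l * y, by simpa [add_comm] using hl.mul hy, by simp⟩, ?_⟩
    exact Ideal.Quotient.eq_zero_iff_mem.2
      (Ideal.mul_mem_right y _ (Ideal.mem_sup_right (Ideal.mem_span_singleton_self l)))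

theorem injective_mulLeft_mk {J : Ideal S} {l : S} (hl : ∀ f, l * f ∈ J → f ∈ J) :
    Function.Injective (LinearMap.mulLeft K (Ideal.Quotient.mk J l)) := by
  refine (injective_iff_map_eq_zero _).2 fun a ha => ?_
  obtain ⟨f, rfl⟩ := Ideal.Quotient.mk_surjective a
  rw [LinearMap.mulLeft_apply, ← map_mul, Ideal.Quotient.eq_zero_iff_mem] at ha
  exact Ideal.Quotient.eq_zero_iff_mem.2 (hl f ha)

/-- Exactness of `0 → (S/J)ₙ → (S/J)ₙ₊₁ → (S/(J + (l)))ₙ₊₁ → 0`, the first map being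
multiplication by the linear nonzerodivisor `l`. -/
theorem finrank_gradedPiece_sup_span_add {J : Ideal S} (hJ : J.IsHomogeneous HS) {l : S}
    (hl : l.IsHomogeneous 1) (hreg : ∀ f, l * f ∈ J → f ∈ J) (n : ℕ) :
    finrank K (gradedPiece K (J ⊔ Ideal.span {l}) (n + 1)) + finrank K (gradedPiece K J n) =
      finrank K (gradedPiece K J (n + 1)) := by
  have h := LinearMap.finrank_map_add_finrank_inf_ker
    (Ideal.Quotient.factorₐ K (le_sup_left : J ≤ J ⊔ Ideal.span {l})).toLinearMap
    (gradedPiece K J (n + 1))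
  rwa [gradedPiece_map_factorₐ, gradedPiece_succ_inf_ker_factorₐ hJ hl,
    ← (Submodule.equivMapOfInjective _ (injective_mulLeft_mk hreg) _).finrank_eq] at h

theorem finrank_gradedPiece_two_add_choose {J : Ideal S} (hJ : J.IsHomogeneous HS)
    (hJtop : J ≠ ⊤) {l : S} (hl : l.IsHomogeneous 1) (hreg : ∀ f, l * f ∈ J → f ∈ J) :
    finrank K (gradedPiece K J 2) +
        (finrank K (gradedPiece K (J ⊔ Ideal.span {l}) 1) + 1).choose 2 =
      finrank K (gradedPiece K (J ⊔ Ideal.span {l}) 2) +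
        (finrank K (gradedPiece K J 1) + 1).choose 2 := by
  have h0 := finrank_gradedPiece_sup_span_add (K := K) hJ hl hreg 0
  have h1 := finrank_gradedPiece_sup_span_add (K := K) hJ hl hreg 1
  simp only [Nat.reduceAdd, finrank_gradedPiece_zero hJtop] at h0 h1
  have hpascal := Nat.choose_succ_succ' (finrank K (gradedPiece K (J ⊔ Ideal.span {l}) 1) + 1) 1
  simp only [Nat.reduceAdd, Nat.choose_one_right] at hpascal
  rw [← h0]
  omega

end GradedPiece

section RegularSequence

variable {K : Type*} [Field K] {N : ℕ}

local notation "S" => MvPolynomial (Fin N) K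
local notation "HS" => homogeneousSubmodule (Fin N) K

attribute [local instance] MvPolynomial.gradedAlgebra

noncomputable def prefixIdeal (I : Ideal S) (L : List S) (k : ℕ) : Ideal S :=
  I ⊔ Ideal.span {g | g ∈ L.take k}

variable {I : Ideal (MvPolynomial (Fin N) K)} {L : List (MvPolynomial (Fin N) K)}

theorem prefixIdeal_zero : prefixIdeal I L 0 = I := by
  simp [prefixIdeal]

theorem prefixIdeal_length : prefixIdeal I L L.length = I ⊔ Ideal.span {g | g ∈ L} := by
  rw [prefixIdeal, List.take_length]

theorem prefixIdeal_succ {k : ℕ} (hk : k < L.length) :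
    prefixIdeal I L (k + 1) = prefixIdeal I L k ⊔ Ideal.span {L[k]} := by
  rw [prefixIdeal, prefixIdeal, sup_assoc, ← Ideal.span_union]
  congr 2
  ext g
  simp only [Set.mem_ofPred_eq, Set.mem_union, Set.mem_singleton_iff, List.take_add_one,
    List.getElem?_eq_getElem hk, Option.toList_some, List.mem_append, List.mem_singleton]

theorem prefixIdeal_ne_top (hreg : IsRegularSeq K I L) (k : ℕ) : prefixIdeal I L k ≠ ⊤ :=
  ne_top_of_le_ne_top hreg.2
    (sup_le_sup_left (Ideal.span_mono fun _ hg => List.mem_of_mem_take hg) I)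

theorem isHomogeneous_prefixIdeal (hI : I.IsHomogeneous HS) (hL : ∀ f ∈ L, f.IsHomogeneous 1)
    (k : ℕ) : (prefixIdeal I L k).IsHomogeneous HS :=
  hI.sup (Ideal.homogeneous_span _ _ fun g hg => ⟨1, hL g (List.mem_of_mem_take hg)⟩)

theorem finrank_gradedPiece_prefixIdeal_succ_add (hI : I.IsHomogeneous HS)
    (hL : ∀ f ∈ L, f.IsHomogeneous 1) (hreg : IsRegularSeq K I L) {k : ℕ} (hk : k < L.length)
    (n : ℕ) :
    finrank K (gradedPiece K (prefixIdeal I L (k + 1)) (n + 1)) +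
        finrank K (gradedPiece K (prefixIdeal I L k) n) =
      finrank K (gradedPiece K (prefixIdeal I L k) (n + 1)) := by
  rw [prefixIdeal_succ hk]
  exact finrank_gradedPiece_sup_span_add (isHomogeneous_prefixIdeal hI hL k)
    (hL _ (List.getElem_mem hk)) (hreg.1 k hk) n

theorem coeff_hilbertSeries_mul_one_sub_X_pow (hI : I.IsHomogeneous HS)
    (hL : ∀ f ∈ L, f.IsHomogeneous 1) (hreg : IsRegularSeq K I L) {k : ℕ} (hk : k ≤ L.length)
    (n : ℕ) :
    PowerSeries.coeff n (hilbertSeries K I * (1 - PowerSeries.X) ^ k) =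
      (finrank K (gradedPiece K (prefixIdeal I L k) n) : ℤ) := by
  induction k generalizing n with
  | zero => rw [prefixIdeal_zero]; simp [hilbertSeries]
  | succ k ih =>
    rw [pow_succ, ← mul_assoc, mul_sub, mul_one, map_sub]
    cases n with
    | zero =>
      rw [PowerSeries.coeff_zero_mul_X, sub_zero, ih (by omega),
        finrank_gradedPiece_zero (prefixIdeal_ne_top hreg _),
        finrank_gradedPiece_zero (prefixIdeal_ne_top hreg _)]
    | succ n =>
      rw [PowerSeries.coeff_succ_mul_X, ih (by omega), ih (by omega),
        ← finrank_gradedPiece_prefixIdeal_succ_add hI hL hreg hk n]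
      push_cast
      ring

theorem finrank_gradedPiece_two_add_choose_prefixIdeal (hI : I.IsHomogeneous HS)
    (hL : ∀ f ∈ L, f.IsHomogeneous 1) (hreg : IsRegularSeq K I L) {k : ℕ} (hk : k ≤ L.length) :
    finrank K (gradedPiece K I 2) +
        (finrank K (gradedPiece K (prefixIdeal I L k) 1) + 1).choose 2 =
      finrank K (gradedPiece K (prefixIdeal I L k) 2) +
        (finrank K (gradedPiece K I 1) + 1).choose 2 := by
  induction k with
  | zero => rw [prefixIdeal_zero]
  | succ k ih =>
    have hstep := finrank_gradedPiece_two_add_choose (isHomogeneous_prefixIdeal hI hL k)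
      (prefixIdeal_ne_top hreg k) (hL _ (List.getElem_mem hk)) (hreg.1 k hk)
    rw [← prefixIdeal_succ hk] at hstep
    have := ih (by omega)
    omega


theorem hilbertSeries_span_mul_one_sub_X_pow_length {G : Set S}
    (hG : ∀ g ∈ G, ∃ m, g.IsHomogeneous m) (hL : ∀ f ∈ L, f.IsHomogeneous 1)
    (hreg : IsRegularSeq K (Ideal.span G) L) :
    hilbertSeries K (Ideal.span G) * (1 - PowerSeries.X) ^ L.length =
      hilbertSeries K (Ideal.span G ⊔ Ideal.span {g | g ∈ L}) := by
  ext n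
  rw [coeff_hilbertSeries_mul_one_sub_X_pow (Ideal.homogeneous_span _ _ hG) hL hreg le_rfl,
    prefixIdeal_length, hilbertSeries, PowerSeries.coeff_mk]
theorem homogeneousSubmodule_inf_span_eq_bot {G : Set S} {m : ℕ}
    (hG : ∀ g ∈ G, g.IsHomogeneous m) {n : ℕ} (hn : n < m) :
    HS n ⊓ (Ideal.span G).restrictScalars K = ⊥ := by
  refine eq_bot_iff.2 fun p ⟨hp, hpG⟩ => ?_
  rw [Submodule.mem_bot, ← homogeneousComponent_eq_self hp]
  exact homogeneousComponent_eq_zero_of_mem_span hG hpG hn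

theorem finrank_homogeneousSubmodule_one : finrank K (HS 1) = N := by
  rw [homogeneousSubmodule_one_eq_span_X, finrank_span_eq_card (linearIndependent_X _ _),
    Fintype.card_fin]

theorem finrank_homogeneousSubmodule_two_le : finrank K (HS 2) ≤ (N + 1).choose 2 := by
  let quadric : Sym2 (Fin N) → S := Sym2.lift ⟨fun i j => X i * X j, fun _ _ => mul_comm _ _⟩
  have hle : HS 2 ≤ Submodule.span K (Set.range quadric) := by
    rw [← homogeneousSubmodule_one_pow, pow_two, homogeneousSubmodule_one_eq_span_X,
      Submodule.span_mul_span]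
    refine Submodule.span_mono ?_
    rintro _ ⟨_, ⟨i, rfl⟩, _, ⟨j, rfl⟩, rfl⟩
    exact ⟨s(i, j), rfl⟩
  have := FiniteDimensional.span_of_finite K (Set.finite_range quadric)
  calc finrank K (HS 2) ≤ finrank K (Submodule.span K (Set.range quadric)) :=
        Submodule.finrank_mono hle
    _ ≤ Fintype.card (Sym2 (Fin N)) := finrank_range_le_card quadric
    _ = (N + 1).choose 2 := by rw [Sym2.card, Fintype.card_fin]

theorem span_eq_bot_of_finrank_gradedPiece_one_le_one {G : Set S}
    (hG : ∀ g ∈ G, g.IsHomogeneous 2) {L : List S} (hL : ∀ f ∈ L, f.IsHomogeneous 1)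
    (hreg : IsRegularSeq K (Ideal.span G) L)
    (h1 : finrank K (gradedPiece K (Ideal.span G ⊔ Ideal.span {g | g ∈ L}) 1) ≤ 1)
    (h2 : 1 ≤ finrank K (gradedPiece K (Ideal.span G ⊔ Ideal.span {g | g ∈ L}) 2)) :
    Ideal.span G = ⊥ := by
  have hI1 : finrank K (gradedPiece K (Ideal.span G) 1) = N := by
    have h := finrank_gradedPiece_add_finrank_inf (Ideal.span G) 1
    rwa [homogeneousSubmodule_inf_span_eq_bot hG one_lt_two, finrank_bot, add_zero,
      finrank_homogeneousSubmodule_one] at h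
  have hinv := finrank_gradedPiece_two_add_choose_prefixIdeal
    (Ideal.homogeneous_span _ _ fun g hg => ⟨2, hG g hg⟩) hL hreg le_rfl
  rw [prefixIdeal_length, hI1] at hinv
  have hchoose :
      (finrank K (gradedPiece K (Ideal.span G ⊔ Ideal.span {g | g ∈ L}) 1) + 1).choose 2 ≤ 1 :=
    Nat.choose_le_choose 2 (by omega : _ ≤ 2)
  have hI2 := finrank_gradedPiece_add_finrank_inf (Ideal.span G) 2
  have hS2 := finrank_homogeneousSubmodule_two_le (K := K) (N := N)
  have hbot : HS 2 ⊓ (Ideal.span G).restrictScalars K = ⊥ :=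
    Submodule.finrank_eq_zero.1 (by omega)
  refine Ideal.span_eq_bot.2 fun g hg => ?_
  have hg2 : g ∈ HS 2 ⊓ (Ideal.span G).restrictScalars K := ⟨hG g hg, Ideal.subset_span hg⟩
  rwa [hbot, Submodule.mem_bot] at hg2

theorem finrank_gradedPiece_le_one_of_socle {J : Ideal S} {n : ℕ}
    (hvanish : gradedPiece K J (n + 1) = ⊥) {a : S ⧸ J}
    (hsoc : ∀ b : S ⧸ J, (∀ i, Ideal.Quotient.mk J (X i) * b = 0) → ∃ c : K, b = c • a) :
    finrank K (gradedPiece K J n) ≤ 1 := by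
  have hle : gradedPiece K J n ≤ K ∙ a := by
    rintro _ ⟨p, hp, rfl⟩
    change Ideal.Quotient.mk J p ∈ _
    obtain ⟨c, hc⟩ := hsoc (Ideal.Quotient.mk J p) fun i => by
      have hXp : Ideal.Quotient.mk J (X i * p) ∈ gradedPiece K J (n + 1) :=
        ⟨X i * p, by simpa [add_comm] using (isHomogeneous_X K i).mul hp, rfl⟩
      rwa [hvanish, Submodule.mem_bot, map_mul] at hXp
    rw [hc]
    exact Submodule.smul_mem _ c (Submodule.mem_span_singleton_self a)
  exact (Submodule.finrank_mono hle).trans ((finrank_span_le_card {a}).trans (by simp))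

end RegularSequence

theorem stmt_17_general (K : Type*) [Field K] {N : ℕ}
    (I : Ideal (MvPolynomial (Fin N) K))
    (G : Set (MvPolynomial (Fin N) K)) (hG : ∀ g ∈ G, g.IsHomogeneous 2)
    (hIG : I = Ideal.span G)
    (hnotprin : ¬ ∃ f : MvPolynomial (Fin N) K, I = Ideal.span {f})
    (L : List (MvPolynomial (Fin N) K)) (hL1 : ∀ f ∈ L, f.IsHomogeneous 1)
    (hreg : IsRegularSeq K I L)
    (A : Ideal (MvPolynomial (Fin N) K)) (hA : A = I ⊔ Ideal.span {g | g ∈ L})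
    (hgor : ∃ a : MvPolynomial (Fin N) K ⧸ A, a ≠ 0 ∧
      (∀ i : Fin N, Ideal.Quotient.mk A (MvPolynomial.X i) * a = 0) ∧
      ∀ b : MvPolynomial (Fin N) K ⧸ A,
        (∀ i : Fin N, Ideal.Quotient.mk A (MvPolynomial.X i) * b = 0) → ∃ c : K, b = c • a)
    (hpoly : Polynomial ℤ)
    (hser : hilbertSeries K I * (1 - PowerSeries.X) ^ L.length =
      (hpoly : PowerSeries ℤ)) :
    (gradedPiece K A 2 ≠ ⊥ ∧ ∀ n : ℕ, 3 ≤ n → gradedPiece K A n = ⊥) ↔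
      (hpoly.coeff 0 = 1 ∧ 1 < hpoly.coeff 1 ∧ hpoly.coeff 2 = 1 ∧
        ∀ i : ℕ, 3 ≤ i → hpoly.coeff i = 0) := by
  subst hIG
  have hcoeff (n : ℕ) : hpoly.coeff n = finrank K (gradedPiece K A n) := by
    rw [← Polynomial.coeff_coe, ← hser, hilbertSeries_span_mul_one_sub_X_pow_length
      (fun g hg => ⟨2, hG g hg⟩) hL1 hreg, ← hA, hilbertSeries, PowerSeries.coeff_mk]
  have h0 := finrank_gradedPiece_zero (hA ▸ hreg.2 : A ≠ ⊤) (K := K)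
  simp only [hcoeff, ne_eq, ← Submodule.finrank_eq_zero (R := K)]
  constructor
  · rintro ⟨h2, h3⟩
    obtain ⟨a, -, -, hsoc⟩ := hgor
    have h2le :=
      finrank_gradedPiece_le_one_of_socle (Submodule.finrank_eq_zero.1 (h3 3 le_rfl)) hsoc
    have h1 : 2 ≤ finrank K (gradedPiece K A 1) := by
      by_contra! h1
      exact hnotprin ⟨0, by
        rw [Ideal.span_singleton_eq_bot.2 rfl]
        exact span_eq_bot_of_finrank_gradedPiece_one_le_one hG hL1 hreg (hA ▸ by omega)
          (hA ▸ by omega)⟩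
    refine ⟨by omega, by omega, by omega, fun i hi => by simp [h3 i hi]⟩
  · rintro ⟨-, -, h2, h3⟩
    exact ⟨by omega, fun n hn => by have := h3 n hn; omega⟩

/-- Let `K` be an infinite field and `I ⊆ S = K[x_1,…,x_N]` a non-principal graded
ideal generated in degree `2` with `S/I` Gorenstein: the linear forms `L` form a
regular sequence on `S/I` with Artinian reduction `A = S/(I + (L))`, and the socle of
`A` is one-dimensional.  Then `I` is extremal Gorenstein — equivalently
`reg S/I = 2`, i.e. the Artinian reduction is nonzero in degree `2` and vanishes in
degrees `≥ 3` — if and only if the `h`-vector of `S/I` (the coefficient vector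
`hpoly` of the numerator of the Hilbert series) has the form `(1, q, 1, 0, …, 0)`
with `q > 1`. -/
theorem stmt_17 (K : Type*) [Field K] [Infinite K] {N : ℕ}
    (I : Ideal (MvPolynomial (Fin N) K))
    (G : Set (MvPolynomial (Fin N) K)) (hG : ∀ g ∈ G, g.IsHomogeneous 2)
    (hIG : I = Ideal.span G)
    (hnotprin : ¬ ∃ f : MvPolynomial (Fin N) K, I = Ideal.span {f})
    (L : List (MvPolynomial (Fin N) K)) (hL1 : ∀ f ∈ L, f.IsHomogeneous 1)
    (hreg : IsRegularSeq K I L)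
    (A : Ideal (MvPolynomial (Fin N) K)) (hA : A = I ⊔ Ideal.span {g | g ∈ L})
    (hart : FiniteDimensional K (MvPolynomial (Fin N) K ⧸ A))
    (hgor : ∃ a : MvPolynomial (Fin N) K ⧸ A, a ≠ 0 ∧
      (∀ i : Fin N, Ideal.Quotient.mk A (MvPolynomial.X i) * a = 0) ∧
      ∀ b : MvPolynomial (Fin N) K ⧸ A,
        (∀ i : Fin N, Ideal.Quotient.mk A (MvPolynomial.X i) * b = 0) → ∃ c : K, b = c • a)
    (hpoly : Polynomial ℤ)
    (hser : hilbertSeries K I * (1 - PowerSeries.X) ^ L.length =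
      (hpoly : PowerSeries ℤ)) :
    (gradedPiece K A 2 ≠ ⊥ ∧ ∀ n : ℕ, 3 ≤ n → gradedPiece K A n = ⊥) ↔
      (hpoly.coeff 0 = 1 ∧ 1 < hpoly.coeff 1 ∧ hpoly.coeff 2 = 1 ∧
        ∀ i : ℕ, 3 ≤ i → hpoly.coeff i = 0) :=
  stmt_17_general K I G hG hIG hnotprin L hL1 hreg A hA hgor hpoly hser
end
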